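/- arXiv:1210.0706 — 8 statements merged into one kernel-verified Lean document; each statement's English description precedes it below -/
import Mathlib

section
/- Let X = ∏_{i=1}^d X_i be a finite product of nonempty finite sets and g : X → ℝ. Define g̃ : X → ℝ by g̃(x) = g̃_∅ + Σ_{m=1}^d g̃_m(x_m) + (1/2) Σ_{m,n=1}^d g̃_{mn}(x_m,x_n), where the components are the ANOVA-HDMR components of g. Then g̃ minimizes the approximation error ‖g − h‖² = Σ_{x∈X} (g(x) − h(x))² over all functions h : X → ℝ of second-order HDMR form, i.e. all h expressible as h(x) = c + Σ_{m=1}^d h_m(x_m) + (1/2) Σ_{m,n=1}^d h_{mn}(x_m,x_n) with h_{mm} = 0; moreover the minimizing function is unique: any second-order HDMR function h attaining the minimum satisfies h(x) = g̃(x) for all x ∈ X. -/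
open Finset Function


private lemma sum_update_one' {d : ℕ} {X : Fin d → Type} [∀ i, Fintype (X i)]
    (m : Fin d) (F : (∀ i, X i) → ℝ) :
    ∑ y : ∀ i, X i, ∑ z : X m, F (Function.update y m z)
      = (Fintype.card (X m) : ℝ) * ∑ y : ∀ i, X i, F y := by
  have hinv : Function.Involutive
      (fun p : (∀ i, X i) × X m => (Function.update p.1 m p.2, p.1 m)) := by
    intro p
    simp [Function.update_idem]
  have h1 : ∑ p : (∀ i, X i) × X m, F (Function.update p.1 m p.2)
      = ∑ p : (∀ i, X i) × X m, F p.1 :=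
    Fintype.sum_bijective _ hinv.bijective _ _ (fun p => rfl)
  calc ∑ y : ∀ i, X i, ∑ z : X m, F (Function.update y m z)
      = ∑ p : (∀ i, X i) × X m, F (Function.update p.1 m p.2) :=
        (Fintype.sum_prod_type (fun p => F (Function.update p.1 m p.2))).symm
    _ = ∑ p : (∀ i, X i) × X m, F p.1 := h1
    _ = (Fintype.card (X m) : ℝ) * ∑ y : ∀ i, X i, F y := by
        rw [Fintype.sum_prod_type]
        simp [Finset.mul_sum, mul_comm]

private lemma sum_update_two' {d : ℕ} {X : Fin d → Type} [∀ i, Fintype (X i)]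
    {m n : Fin d} (hmn : m ≠ n) (F : (∀ i, X i) → ℝ) :
    ∑ y : ∀ i, X i, ∑ z : X m, ∑ w : X n,
        F (Function.update (Function.update y m z) n w)
      = (Fintype.card (X m) : ℝ) * ((Fintype.card (X n) : ℝ) * ∑ y : ∀ i, X i, F y) := by
  have step1 : ∀ z : X m,
      ∑ y : ∀ i, X i, ∑ w : X n, F (Function.update (Function.update y m z) n w)
        = (Fintype.card (X n) : ℝ) * ∑ y : ∀ i, X i, F (Function.update y m z) := by
    intro z
    have key := sum_update_one' n (fun y => F (Function.update y m z))
    calc ∑ y : ∀ i, X i, ∑ w : X n, F (Function.update (Function.update y m z) n w)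
        = ∑ y : ∀ i, X i, ∑ w : X n, F (Function.update (Function.update y n w) m z) := by
          refine Finset.sum_congr rfl fun y _ => Finset.sum_congr rfl fun w _ => ?_
          rw [Function.update_comm hmn]
      _ = (Fintype.card (X n) : ℝ) * ∑ y : ∀ i, X i, F (Function.update y m z) := key
  calc ∑ y : ∀ i, X i, ∑ z : X m, ∑ w : X n,
          F (Function.update (Function.update y m z) n w)
      = ∑ z : X m, ∑ y : ∀ i, X i, ∑ w : X n,
          F (Function.update (Function.update y m z) n w) := Finset.sum_comm
    _ = ∑ z : X m, (Fintype.card (X n) : ℝ) * ∑ y : ∀ i, X i, F (Function.update y m z) :=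
        Finset.sum_congr rfl fun z _ => step1 z
    _ = (Fintype.card (X n) : ℝ) * ∑ y : ∀ i, X i, ∑ z : X m, F (Function.update y m z) := by
        rw [← Finset.mul_sum, Finset.sum_comm]
    _ = (Fintype.card (X m) : ℝ) * ((Fintype.card (X n) : ℝ) * ∑ y : ∀ i, X i, F y) := by
        rw [sum_update_one' m F]; ring

private lemma sum_eval_one' {d : ℕ} {X : Fin d → Type} [∀ i, Fintype (X i)]
    [∀ i, Nonempty (X i)] (m : Fin d) (φ : X m → ℝ) (h : ∑ z : X m, φ z = 0) :
    ∑ y : ∀ i, X i, φ (y m) = 0 := by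
  have key := sum_update_one' m (fun y => φ (y m))
  simp only [Function.update_self] at key
  rw [Finset.sum_congr rfl (fun (y : ∀ i, X i) _ => h), Finset.sum_const] at key
  have hc : (Fintype.card (X m) : ℝ) ≠ 0 := by
    exact_mod_cast Fintype.card_ne_zero
  simpa [hc] using key.symm

private lemma sum_eval_two' {d : ℕ} {X : Fin d → Type} [∀ i, Fintype (X i)]
    [∀ i, Nonempty (X i)] {m n : Fin d} (hmn : m ≠ n) (φ : X m → X n → ℝ)
    (h : ∀ w : X n, ∑ z : X m, φ z w = 0) :
    ∑ y : ∀ i, X i, φ (y m) (y n) = 0 := by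
  have key := sum_update_one' m (fun y => φ (y m) (y n))
  simp only [Function.update_self, Function.update_of_ne hmn.symm] at key
  rw [Finset.sum_congr rfl (fun (y : ∀ i, X i) _ => h (y n))] at key
  have hc : (Fintype.card (X m) : ℝ) ≠ 0 := by
    exact_mod_cast Fintype.card_ne_zero
  simpa [hc] using key.symm

private lemma expand_form' {d : ℕ} {X : Fin d → Type} [∀ i, Fintype (X i)]
    (c : ℝ) (h1 : ∀ m : Fin d, X m → ℝ) (h2 : ∀ m n : Fin d, X m → X n → ℝ)
    (u : (∀ i, X i) → (∀ i, X i)) :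
    ∑ y : ∀ i, X i,
        (c + ∑ m, h1 m (u y m) + (1 / 2) * ∑ m, ∑ n, h2 m n (u y m) (u y n))
      = (Fintype.card (∀ i, X i) : ℝ) * c + (∑ m, ∑ y : ∀ i, X i, h1 m (u y m))
        + (1 / 2) * ∑ m, ∑ n, ∑ y : ∀ i, X i, h2 m n (u y m) (u y n) := by
  rw [Finset.sum_add_distrib, Finset.sum_add_distrib, ← Finset.mul_sum]
  congr 1
  · congr 1
    · simp [Finset.sum_const, mul_comm]
    · exact Finset.sum_comm
  · congr 1
    rw [Finset.sum_comm]
    exact Finset.sum_congr rfl fun m _ => Finset.sum_comm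

private lemma orth_one' {d : ℕ} {X : Fin d → Type} [∀ i, Fintype (X i)]
    [∀ i, Nonempty (X i)] (r : (∀ i, X i) → ℝ) (m : Fin d) (ψ : X m → ℝ)
    (hB : ∀ z : X m, ∑ y : ∀ i, X i, r (Function.update y m z) = 0) :
    ∑ x : ∀ i, X i, r x * ψ (x m) = 0 := by
  have key := sum_update_one' m (fun x => r x * ψ (x m))
  simp only [Function.update_self] at key
  have hz : ∑ y : ∀ i, X i, ∑ z : X m, r (Function.update y m z) * ψ z = 0 := by
    rw [Finset.sum_comm]
    refine Finset.sum_eq_zero fun z _ => ?_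
    rw [← Finset.sum_mul, hB z, zero_mul]
  rw [hz] at key
  have hc : (Fintype.card (X m) : ℝ) ≠ 0 := by exact_mod_cast Fintype.card_ne_zero
  rcases mul_eq_zero.mp key.symm with h | h
  · exact absurd h hc
  · exact h

private lemma orth_two' {d : ℕ} {X : Fin d → Type} [∀ i, Fintype (X i)]
    [∀ i, Nonempty (X i)] (r : (∀ i, X i) → ℝ) {m n : Fin d} (hmn : m ≠ n)
    (ψ : X m → X n → ℝ)
    (hC : ∀ (z : X m) (w : X n),
      ∑ y : ∀ i, X i, r (Function.update (Function.update y m z) n w) = 0) :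
    ∑ x : ∀ i, X i, r x * ψ (x m) (x n) = 0 := by
  have key := sum_update_two' hmn (fun x => r x * ψ (x m) (x n))
  simp only [Function.update_self, Function.update_of_ne hmn] at key
  have hz : ∑ y : ∀ i, X i, ∑ z : X m, ∑ w : X n,
      r (Function.update (Function.update y m z) n w) * ψ z w = 0 := by
    rw [Finset.sum_comm]
    refine Finset.sum_eq_zero fun z _ => ?_
    rw [Finset.sum_comm]
    refine Finset.sum_eq_zero fun w _ => ?_
    rw [← Finset.sum_mul, hC z w, zero_mul]
  rw [hz] at key
  have hcm : (Fintype.card (X m) : ℝ) ≠ 0 := by exact_mod_cast Fintype.card_ne_zero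
  have hcn : (Fintype.card (X n) : ℝ) ≠ 0 := by exact_mod_cast Fintype.card_ne_zero
  rcases mul_eq_zero.mp key.symm with h | h
  · exact absurd h hcm
  · rcases mul_eq_zero.mp h with h' | h'
    · exact absurd h' hcn
    · exact h'

private lemma orth_zero' {d : ℕ} {X : Fin d → Type} [∀ i, Fintype (X i)]
    [∀ i, Nonempty (X i)] (r : (∀ i, X i) → ℝ)
    (hA : ∑ x : ∀ i, X i, r x = 0)
    (hB : ∀ (m : Fin d) (z : X m), ∑ y : ∀ i, X i, r (Function.update y m z) = 0)
    (hC : ∀ (m n : Fin d), m ≠ n → ∀ (z : X m) (w : X n),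
      ∑ y : ∀ i, X i, r (Function.update (Function.update y m z) n w) = 0)
    (c : ℝ) (h1 : ∀ m : Fin d, X m → ℝ) (h2 : ∀ m n : Fin d, X m → X n → ℝ)
    (hdiag : ∀ (m : Fin d) (a b : X m), h2 m m a b = 0) :
    ∑ x : ∀ i, X i,
      r x * (c + ∑ m, h1 m (x m) + (1 / 2) * ∑ m, ∑ n, h2 m n (x m) (x n)) = 0 := by
  have hpt : ∀ x : ∀ i, X i,
      r x * (c + ∑ m, h1 m (x m) + (1 / 2) * ∑ m, ∑ n, h2 m n (x m) (x n))
        = r x * c + (∑ m, r x * h1 m (x m))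
          + (1 / 2) * ∑ m, ∑ n, r x * h2 m n (x m) (x n) := by
    intro x
    rw [← Finset.mul_sum]
    have : ∑ m, ∑ n, r x * h2 m n (x m) (x n)
        = r x * ∑ m, ∑ n, h2 m n (x m) (x n) := by
      rw [Finset.mul_sum]
      exact Finset.sum_congr rfl fun m _ => (Finset.mul_sum _ _ _).symm
    rw [this]
    ring
  rw [Finset.sum_congr rfl fun x _ => hpt x, Finset.sum_add_distrib,
    Finset.sum_add_distrib, ← Finset.sum_mul, hA, zero_mul, ← Finset.mul_sum]
  have hmid : ∑ x : ∀ i, X i, ∑ m, r x * h1 m (x m) = 0 := by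
    rw [Finset.sum_comm]
    exact Finset.sum_eq_zero fun m _ => orth_one' r m (h1 m) (hB m)
  have hlast : ∑ x : ∀ i, X i, ∑ m, ∑ n, r x * h2 m n (x m) (x n) = 0 := by
    rw [Finset.sum_comm]
    refine Finset.sum_eq_zero fun m _ => ?_
    rw [Finset.sum_comm]
    refine Finset.sum_eq_zero fun n _ => ?_
    by_cases hmn : m = n
    · subst hmn
      simp [hdiag]
    · exact orth_two' r hmn (h2 m n) (hC m n hmn)
  rw [hmid, hlast]
  ring

set_option maxHeartbeats 4000000 in
/-- The function `g̃` built from the ANOVA-HDMR components of `g`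
minimizes the squared approximation error `∑ x, (g x - h x)^2` over all functions
`h` of second-order HDMR form, and the minimizing function is unique: any
second-order HDMR function attaining the minimum coincides pointwise with `g̃`. -/
theorem anova_hdmr_is_best_second_order_approximation
    (d : ℕ) (X : Fin d → Type) [∀ i, Fintype (X i)] [∀ i, Nonempty (X i)]
    (g : (∀ i, X i) → ℝ)
    (g0 : ℝ) (g1 : ∀ m : Fin d, X m → ℝ) (g2 : ∀ m n : Fin d, X m → X n → ℝ)
    (hg0 : g0 = (∑ x : ∀ i, X i, g x) / (Fintype.card (∀ i, X i) : ℝ))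
    (hg1 : ∀ (m : Fin d) (xm : X m),
      g1 m xm =
        (∑ y : ∀ i, X i, g (Function.update y m xm)) / (Fintype.card (∀ i, X i) : ℝ) - g0)
    (hg2 : ∀ (m n : Fin d), m ≠ n → ∀ (xm : X m) (xn : X n),
      g2 m n xm xn =
        (∑ y : ∀ i, X i, g (Function.update (Function.update y m xm) n xn)) /
          (Fintype.card (∀ i, X i) : ℝ) - g1 m xm - g1 n xn - g0)
    (hg2diag : ∀ (m : Fin d) (xm xm' : X m), g2 m m xm xm' = 0)
    (gt : (∀ i, X i) → ℝ)
    (hgt : ∀ x, gt x =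
      g0 + ∑ m, g1 m (x m) + (1 / 2) * ∑ m, ∑ n, g2 m n (x m) (x n)) :
    -- (i) minimality over all second-order HDMR functions
    (∀ (c : ℝ) (h1 : ∀ m : Fin d, X m → ℝ) (h2 : ∀ m n : Fin d, X m → X n → ℝ),
      (∀ (m : Fin d) (xm xm' : X m), h2 m m xm xm' = 0) →
      ∑ x : ∀ i, X i, (g x - gt x) ^ 2 ≤
        ∑ x : ∀ i, X i,
          (g x - (c + ∑ m, h1 m (x m) + (1 / 2) * ∑ m, ∑ n, h2 m n (x m) (x n))) ^ 2) ∧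
    -- (ii) uniqueness of the minimizing function
    (∀ (c : ℝ) (h1 : ∀ m : Fin d, X m → ℝ) (h2 : ∀ m n : Fin d, X m → X n → ℝ),
      (∀ (m : Fin d) (xm xm' : X m), h2 m m xm xm' = 0) →
      (∑ x : ∀ i, X i,
          (g x - (c + ∑ m, h1 m (x m) + (1 / 2) * ∑ m, ∑ n, h2 m n (x m) (x n))) ^ 2
        = ∑ x : ∀ i, X i, (g x - gt x) ^ 2) →
      ∀ x : ∀ i, X i,
        c + ∑ m, h1 m (x m) + (1 / 2) * ∑ m, ∑ n, h2 m n (x m) (x n) = gt x) :=by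
  classical
  set N : ℝ := (Fintype.card (∀ i, X i) : ℝ) with hNdef
  have hN : N ≠ 0 := by
    rw [hNdef]
    exact_mod_cast Fintype.card_ne_zero
  have hconst : ∀ a : ℝ, ∑ _y : ∀ i, X i, a = N * a := by
    intro a
    rw [Finset.sum_const, Finset.card_univ, nsmul_eq_mul, hNdef]
  have hconstX : ∀ (m : Fin d) (a : ℝ), ∑ _z : X m, a = (Fintype.card (X m) : ℝ) * a := by
    intro m a
    rw [Finset.sum_const, Finset.card_univ, nsmul_eq_mul]
  -- marginals of g
  have hS : ∑ x : ∀ i, X i, g x = N * g0 := by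
    rw [hg0]; field_simp
  have hSm : ∀ (m : Fin d) (z : X m),
      ∑ y : ∀ i, X i, g (Function.update y m z) = N * (g0 + g1 m z) := by
    intro m z
    rw [hg1 m z]
    field_simp
    ring
  have hSmn : ∀ (m n : Fin d), m ≠ n → ∀ (z : X m) (w : X n),
      ∑ y : ∀ i, X i, g (Function.update (Function.update y m z) n w)
        = N * (g0 + g1 m z + g1 n w + g2 m n z w) := by
    intro m n hmn z w
    rw [hg2 m n hmn z w]
    field_simp
    ring
  -- component identities
  have Q1 : ∀ m : Fin d, ∑ z : X m, g1 m z = 0 := by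
    intro m
    have key : ∑ z : X m, ∑ y : ∀ i, X i, g (Function.update y m z)
        = (Fintype.card (X m) : ℝ) * (N * g0) := by
      rw [Finset.sum_comm]
      calc ∑ y : ∀ i, X i, ∑ z : X m, g (Function.update y m z)
          = (Fintype.card (X m) : ℝ) * ∑ x : ∀ i, X i, g x := sum_update_one' m g
        _ = (Fintype.card (X m) : ℝ) * (N * g0) := by rw [hS]
    calc ∑ z : X m, g1 m z
        = ∑ z : X m, ((∑ y : ∀ i, X i, g (Function.update y m z)) / N - g0) :=
          Finset.sum_congr rfl fun z _ => hg1 m z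
      _ = (∑ z : X m, ∑ y : ∀ i, X i, g (Function.update y m z)) / N
            - (Fintype.card (X m) : ℝ) * g0 := by
          rw [Finset.sum_sub_distrib, ← Finset.sum_div, hconstX]
      _ = 0 := by rw [key]; field_simp; ring
  have Q2a : ∀ (m n : Fin d), m ≠ n → ∀ w : X n, ∑ z : X m, g2 m n z w = 0 := by
    intro m n hmn w
    have key : ∑ z : X m, ∑ y : ∀ i, X i,
        g (Function.update (Function.update y m z) n w)
        = (Fintype.card (X m) : ℝ) * (N * (g0 + g1 n w)) := by
      rw [Finset.sum_comm]
      calc ∑ y : ∀ i, X i, ∑ z : X m, g (Function.update (Function.update y m z) n w)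
          = (Fintype.card (X m) : ℝ) * ∑ y : ∀ i, X i, g (Function.update y n w) :=
            sum_update_one' m (fun y => g (Function.update y n w))
        _ = (Fintype.card (X m) : ℝ) * (N * (g0 + g1 n w)) := by rw [hSm n w]
    calc ∑ z : X m, g2 m n z w
        = ∑ z : X m, ((∑ y : ∀ i, X i,
            g (Function.update (Function.update y m z) n w)) / N
            - g1 m z - g1 n w - g0) :=
          Finset.sum_congr rfl fun z _ => hg2 m n hmn z w
      _ = (∑ z : X m, ∑ y : ∀ i, X i,
            g (Function.update (Function.update y m z) n w)) / N
            - (∑ z : X m, g1 m z) - (Fintype.card (X m) : ℝ) * g1 n w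
            - (Fintype.card (X m) : ℝ) * g0 := by
          rw [Finset.sum_sub_distrib, Finset.sum_sub_distrib, Finset.sum_sub_distrib,
            ← Finset.sum_div, hconstX, hconstX]
      _ = 0 := by rw [key, Q1 m]; field_simp; ring
  have Qsym : ∀ (m n : Fin d), m ≠ n → ∀ (z : X m) (w : X n),
      g2 m n z w = g2 n m w z := by
    intro m n hmn z w
    rw [hg2 m n hmn z w, hg2 n m hmn.symm w z]
    have : ∑ y : ∀ i, X i, g (Function.update (Function.update y m z) n w)
        = ∑ y : ∀ i, X i, g (Function.update (Function.update y n w) m z) := by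
      refine Finset.sum_congr rfl fun y _ => ?_
      rw [Function.update_comm hmn]
    rw [this]
    ring
  have Q2b : ∀ (m n : Fin d), m ≠ n → ∀ z : X m, ∑ w : X n, g2 m n z w = 0 := by
    intro m n hmn z
    calc ∑ w : X n, g2 m n z w = ∑ w : X n, g2 n m w z :=
          Finset.sum_congr rfl fun w _ => Qsym m n hmn z w
      _ = 0 := Q2a n m hmn.symm z
  -- marginals of gt
  have hAgt : ∑ x : ∀ i, X i, gt x = N * g0 := by
    have e1 : ∀ k : Fin d, ∑ y : ∀ i, X i, g1 k (y k) = 0 :=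
      fun k => sum_eval_one' k (g1 k) (Q1 k)
    have e2 : ∀ k l : Fin d, ∑ y : ∀ i, X i, g2 k l (y k) (y l) = 0 := by
      intro k l
      by_cases hkl : k = l
      · subst hkl; simp [hg2diag]
      · exact sum_eval_two' hkl (g2 k l) (fun b => Q2a k l hkl b)
    calc ∑ x : ∀ i, X i, gt x
        = ∑ x : ∀ i, X i,
            (g0 + ∑ m, g1 m (x m) + (1 / 2) * ∑ m, ∑ n, g2 m n (x m) (x n)) :=
          Finset.sum_congr rfl fun x _ => hgt x
      _ = N * g0 + (∑ m, ∑ y : ∀ i, X i, g1 m (y m))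
            + (1 / 2) * ∑ m, ∑ n, ∑ y : ∀ i, X i, g2 m n (y m) (y n) :=
          expand_form' g0 g1 g2 (fun y => y)
      _ = N * g0 := by
          rw [Finset.sum_eq_zero fun m _ => e1 m,
            Finset.sum_eq_zero fun m _ => Finset.sum_eq_zero fun n _ => e2 m n]
          ring
  have hBgt : ∀ (m : Fin d) (z : X m),
      ∑ y : ∀ i, X i, gt (Function.update y m z) = N * (g0 + g1 m z) := by
    intro m z
    have t1 : ∀ k : Fin d,
        ∑ y : ∀ i, X i, g1 k (Function.update y m z k)
          = if k = m then N * g1 m z else 0 := by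
      intro k
      by_cases hk : k = m
      · subst hk
        rw [if_pos rfl]
        simp only [Function.update_self]
        exact hconst _
      · rw [if_neg hk]
        simp only [Function.update_of_ne hk]
        exact sum_eval_one' k (g1 k) (Q1 k)
    have t2 : ∀ k l : Fin d,
        ∑ y : ∀ i, X i, g2 k l (Function.update y m z k) (Function.update y m z l)
          = 0 := by
      intro k l
      by_cases hk : m = k
      · subst hk
        by_cases hl : m = l
        · subst hl
          simp only [Function.update_self]
          simp [hg2diag]
        · have hlm : l ≠ m := fun h => hl h.symm
          simp only [Function.update_self, Function.update_of_ne hlm]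
          exact sum_eval_one' l (fun b => g2 m l z b) (Q2b m l hl z)
      · have hkm : k ≠ m := fun h => hk h.symm
        by_cases hl : m = l
        · subst hl
          simp only [Function.update_self, Function.update_of_ne hkm]
          exact sum_eval_one' k (fun a => g2 k m a z) (Q2a k m hkm z)
        · have hlm : l ≠ m := fun h => hl h.symm
          simp only [Function.update_of_ne hkm, Function.update_of_ne hlm]
          by_cases hkl : k = l
          · subst hkl
            simp [hg2diag]
          · exact sum_eval_two' hkl (g2 k l) (fun b => Q2a k l hkl b)
    calc ∑ y : ∀ i, X i, gt (Function.update y m z)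
        = ∑ y : ∀ i, X i,
            (g0 + ∑ k, g1 k (Function.update y m z k)
              + (1 / 2) * ∑ k, ∑ l,
                  g2 k l (Function.update y m z k) (Function.update y m z l)) :=
          Finset.sum_congr rfl fun y _ => hgt _
      _ = N * g0 + (∑ k, ∑ y : ∀ i, X i, g1 k (Function.update y m z k))
            + (1 / 2) * ∑ k, ∑ l, ∑ y : ∀ i, X i,
                g2 k l (Function.update y m z k) (Function.update y m z l) :=
          expand_form' g0 g1 g2 (fun y => Function.update y m z)
      _ = N * g0 + N * g1 m z + (1 / 2) * 0 := by
          rw [Finset.sum_congr rfl fun k _ => t1 k,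
            Finset.sum_eq_zero fun k _ => Finset.sum_eq_zero fun l _ => t2 k l]
          simp [Finset.sum_ite_eq']
      _ = N * (g0 + g1 m z) := by ring
  have hCgt : ∀ (m n : Fin d), m ≠ n → ∀ (z : X m) (w : X n),
      ∑ y : ∀ i, X i, gt (Function.update (Function.update y m z) n w)
        = N * (g0 + g1 m z + g1 n w + g2 m n z w) := by
    intro m n hmn z w
    have t1 : ∀ k : Fin d,
        ∑ y : ∀ i, X i, g1 k (Function.update (Function.update y m z) n w k)
          = (if k = m then N * g1 m z else 0) + (if k = n then N * g1 n w else 0) := by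
      intro k
      by_cases hk : m = k
      · subst hk
        rw [if_pos rfl, if_neg hmn, add_zero]
        simp only [Function.update_of_ne hmn, Function.update_self]
        exact hconst _
      · by_cases hk2 : n = k
        · subst hk2
          rw [if_neg (Ne.symm hmn), if_pos rfl, zero_add]
          simp only [Function.update_self]
          exact hconst _
        · have hkm : k ≠ m := fun h => hk h.symm
          have hkn : k ≠ n := fun h => hk2 h.symm
          simp only [Function.update_of_ne hkn, Function.update_of_ne hkm]
          rw [if_neg hkm, if_neg hkn, add_zero]
          exact sum_eval_one' k (g1 k) (Q1 k)
    have t2 : ∀ k l : Fin d,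
        ∑ y : ∀ i, X i,
            g2 k l (Function.update (Function.update y m z) n w k)
              (Function.update (Function.update y m z) n w l)
          = (if k = m then (if l = n then N * g2 m n z w else 0) else 0)
            + (if k = n then (if l = m then N * g2 n m w z else 0) else 0) := by
      intro k l
      by_cases hk : m = k
      · subst hk
        rw [if_pos rfl, if_neg hmn, add_zero]
        by_cases hl : n = l
        · subst hl
          rw [if_pos rfl]
          simp only [Function.update_of_ne hmn, Function.update_self]
          exact hconst _
        · have hln : l ≠ n := fun h => hl h.symm
          rw [if_neg hln]
          by_cases hl2 : m = l
          · subst hl2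
            simp only [Function.update_of_ne hmn, Function.update_self]
            simp [hg2diag]
          · have hlm : l ≠ m := fun h => hl2 h.symm
            simp only [Function.update_of_ne hmn, Function.update_self,
              Function.update_of_ne hln, Function.update_of_ne hlm]
            exact sum_eval_one' l (fun b => g2 m l z b) (Q2b m l hl2 z)
      · have hkm : k ≠ m := fun h => hk h.symm
        rw [if_neg hkm]
        by_cases hk2 : n = k
        · subst hk2
          rw [if_pos rfl, zero_add]
          by_cases hl : m = l
          · subst hl
            rw [if_pos rfl]
            simp only [Function.update_self, Function.update_of_ne hmn]
            exact hconst _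
          · have hlm : l ≠ m := fun h => hl h.symm
            rw [if_neg hlm]
            by_cases hl2 : n = l
            · subst hl2
              simp only [Function.update_self]
              simp [hg2diag]
            · have hln : l ≠ n := fun h => hl2 h.symm
              simp only [Function.update_self, Function.update_of_ne hln,
                Function.update_of_ne hlm]
              exact sum_eval_one' l (fun b => g2 n l w b) (Q2b n l hl2 w)
        · have hkn : k ≠ n := fun h => hk2 h.symm
          rw [if_neg hkn, add_zero]
          simp only [Function.update_of_ne hkn, Function.update_of_ne hkm]
          by_cases hl : m = l
          · subst hl
            simp only [Function.update_of_ne hmn, Function.update_self]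
            exact sum_eval_one' k (fun a => g2 k m a z) (Q2a k m hkm z)
          · have hlm : l ≠ m := fun h => hl h.symm
            by_cases hl2 : n = l
            · subst hl2
              simp only [Function.update_self]
              exact sum_eval_one' k (fun a => g2 k n a w) (Q2a k n hkn w)
            · have hln : l ≠ n := fun h => hl2 h.symm
              simp only [Function.update_of_ne hln, Function.update_of_ne hlm]
              by_cases hkl : k = l
              · subst hkl
                simp [hg2diag]
              · exact sum_eval_two' hkl (g2 k l) (fun b => Q2a k l hkl b)
    have collapse : ∀ (k mm nn : Fin d) (A : ℝ),
        ∑ l : Fin d, (if k = mm then (if l = nn then A else 0) else 0)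
          = if k = mm then A else 0 := by
      intro k mm nn A
      by_cases h : k = mm
      · simp [h, Finset.sum_ite_eq']
      · simp [h]
    calc ∑ y : ∀ i, X i, gt (Function.update (Function.update y m z) n w)
        = ∑ y : ∀ i, X i,
            (g0 + ∑ k, g1 k (Function.update (Function.update y m z) n w k)
              + (1 / 2) * ∑ k, ∑ l,
                  g2 k l (Function.update (Function.update y m z) n w k)
                    (Function.update (Function.update y m z) n w l)) :=
          Finset.sum_congr rfl fun y _ => hgt _
      _ = N * g0
            + (∑ k, ∑ y : ∀ i, X i,
                g1 k (Function.update (Function.update y m z) n w k))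
            + (1 / 2) * ∑ k, ∑ l, ∑ y : ∀ i, X i,
                g2 k l (Function.update (Function.update y m z) n w k)
                  (Function.update (Function.update y m z) n w l) :=
          expand_form' g0 g1 g2 (fun y => Function.update (Function.update y m z) n w)
      _ = N * g0 + (N * g1 m z + N * g1 n w)
            + (1 / 2) * (N * g2 m n z w + N * g2 n m w z) := by
          rw [Finset.sum_congr rfl fun k _ => t1 k, Finset.sum_add_distrib]
          rw [Finset.sum_congr rfl fun k _ =>
            (Finset.sum_congr rfl fun l _ => t2 k l).trans
              (by rw [Finset.sum_add_distrib, collapse, collapse])]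
          rw [Finset.sum_add_distrib]
          simp [Finset.sum_ite_eq']
      _ = N * (g0 + g1 m z + g1 n w + g2 m n z w) := by
          rw [← Qsym m n hmn z w]
          ring
  -- residual marginals
  have rA : ∑ x : ∀ i, X i, (g x - gt x) = 0 := by
    rw [Finset.sum_sub_distrib, hS, hAgt]
    ring
  have rB : ∀ (m : Fin d) (z : X m),
      ∑ y : ∀ i, X i, (g (Function.update y m z) - gt (Function.update y m z)) = 0 := by
    intro m z
    rw [Finset.sum_sub_distrib, hSm m z, hBgt m z]
    ring
  have rC : ∀ (m n : Fin d), m ≠ n → ∀ (z : X m) (w : X n),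
      ∑ y : ∀ i, X i,
        (g (Function.update (Function.update y m z) n w)
          - gt (Function.update (Function.update y m z) n w)) = 0 := by
    intro m n hmn z w
    rw [Finset.sum_sub_distrib, hSmn m n hmn z w, hCgt m n hmn z w]
    ring
  have horth : ∀ (c : ℝ) (h1 : ∀ m : Fin d, X m → ℝ) (h2 : ∀ m n : Fin d, X m → X n → ℝ),
      (∀ (m : Fin d) (a b : X m), h2 m m a b = 0) →
      ∑ x : ∀ i, X i,
        (g x - gt x) * (c + ∑ m, h1 m (x m) + (1 / 2) * ∑ m, ∑ n, h2 m n (x m) (x n))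
          = 0 :=
    fun c h1 h2 hd => orth_zero' (fun x => g x - gt x) rA rB rC c h1 h2 hd
  -- decomposition of the error
  have key : ∀ (c : ℝ) (h1 : ∀ m : Fin d, X m → ℝ) (h2 : ∀ m n : Fin d, X m → X n → ℝ),
      (∀ (m : Fin d) (a b : X m), h2 m m a b = 0) →
      ∑ x : ∀ i, X i,
          (g x - (c + ∑ m, h1 m (x m) + (1 / 2) * ∑ m, ∑ n, h2 m n (x m) (x n))) ^ 2
        = ∑ x : ∀ i, X i, (g x - gt x) ^ 2
          + ∑ x : ∀ i, X i,
              (gt x - (c + ∑ m, h1 m (x m)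
                + (1 / 2) * ∑ m, ∑ n, h2 m n (x m) (x n))) ^ 2 := by
    intro c h1 h2 hd
    have hdiff : ∀ x : ∀ i, X i,
        gt x - (c + ∑ m, h1 m (x m) + (1 / 2) * ∑ m, ∑ n, h2 m n (x m) (x n))
          = (g0 - c) + ∑ m, (g1 m (x m) - h1 m (x m))
            + (1 / 2) * ∑ m, ∑ n, (g2 m n (x m) (x n) - h2 m n (x m) (x n)) := by
      intro x
      rw [hgt x]
      simp only [Finset.sum_sub_distrib]
      ring
    have hcross : ∑ x : ∀ i, X i,
        (g x - gt x)
          * (gt x - (c + ∑ m, h1 m (x m)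
              + (1 / 2) * ∑ m, ∑ n, h2 m n (x m) (x n))) = 0 := by
      calc ∑ x : ∀ i, X i,
            (g x - gt x)
              * (gt x - (c + ∑ m, h1 m (x m)
                  + (1 / 2) * ∑ m, ∑ n, h2 m n (x m) (x n)))
          = ∑ x : ∀ i, X i,
              (g x - gt x)
                * ((g0 - c) + ∑ m, (g1 m (x m) - h1 m (x m))
                  + (1 / 2) * ∑ m, ∑ n, (g2 m n (x m) (x n) - h2 m n (x m) (x n))) :=
            Finset.sum_congr rfl fun x _ => by rw [hdiff x]
        _ = 0 :=
            orth_zero' (fun x => g x - gt x) rA rB rC (g0 - c)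
              (fun m a => g1 m a - h1 m a)
              (fun m n a b => g2 m n a b - h2 m n a b)
              (fun m a b => by
                show g2 m m a b - h2 m m a b = 0
                rw [hg2diag m a b, hd m a b, sub_zero])
    calc ∑ x : ∀ i, X i,
          (g x - (c + ∑ m, h1 m (x m) + (1 / 2) * ∑ m, ∑ n, h2 m n (x m) (x n))) ^ 2
        = ∑ x : ∀ i, X i,
            ((g x - gt x) ^ 2
              + 2 * ((g x - gt x)
                  * (gt x - (c + ∑ m, h1 m (x m)
                      + (1 / 2) * ∑ m, ∑ n, h2 m n (x m) (x n))))
              + (gt x - (c + ∑ m, h1 m (x m)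
                  + (1 / 2) * ∑ m, ∑ n, h2 m n (x m) (x n))) ^ 2) :=
          Finset.sum_congr rfl fun x _ => by ring
      _ = ∑ x : ∀ i, X i, (g x - gt x) ^ 2
            + 2 * ∑ x : ∀ i, X i,
                ((g x - gt x)
                  * (gt x - (c + ∑ m, h1 m (x m)
                      + (1 / 2) * ∑ m, ∑ n, h2 m n (x m) (x n))))
            + ∑ x : ∀ i, X i,
                (gt x - (c + ∑ m, h1 m (x m)
                  + (1 / 2) * ∑ m, ∑ n, h2 m n (x m) (x n))) ^ 2 := by
          rw [Finset.sum_add_distrib, Finset.sum_add_distrib, ← Finset.mul_sum]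
      _ = _ := by rw [hcross]; ring
  constructor
  · intro c h1 h2 hd
    rw [key c h1 h2 hd]
    have hnn : (0:ℝ) ≤ ∑ x : ∀ i, X i,
        (gt x - (c + ∑ m, h1 m (x m)
          + (1 / 2) * ∑ m, ∑ n, h2 m n (x m) (x n))) ^ 2 :=
      Finset.sum_nonneg fun x _ => sq_nonneg _
    linarith
  · intro c h1 h2 hd heq x
    have hk := key c h1 h2 hd
    rw [heq] at hk
    have h0 : ∑ x : ∀ i, X i,
        (gt x - (c + ∑ m, h1 m (x m)
          + (1 / 2) * ∑ m, ∑ n, h2 m n (x m) (x n))) ^ 2 = 0 := by linarith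
    have hx := (Finset.sum_eq_zero_iff_of_nonneg
      (fun x _ => sq_nonneg (gt x - (c + ∑ m, h1 m (x m)
        + (1 / 2) * ∑ m, ∑ n, h2 m n (x m) (x n))))).mp h0 x (Finset.mem_univ x)
    have hx2 : gt x - (c + ∑ m, h1 m (x m)
        + (1 / 2) * ∑ m, ∑ n, h2 m n (x m) (x n)) = 0 :=
      pow_eq_zero_iff (two_ne_zero) |>.mp hx
    linarith
end

section
/- Let X = ∏_{i=1}^d X_i be a finite product of nonempty finite sets. Suppose two families of components (c, h_m, h_{mn}) and (c', h'_m, h'_{mn}) (with h_{mm} = h'_{mm} = 0, h_{mn}(x_m,x_n) = h_{nm}(x_n,x_m)) both satisfy the normalization conditions Σ_{x_m} h_m(x_m) = 0 for all m and Σ_{x_m} h_{mn}(x_m, x_n) = 0 for all m ≠ n and every fixed x_n ∈ X_n (and likewise for the primed family), and suppose their HDMR sums coincide pointwise: c + Σ_m h_m(x_m) + (1/2) Σ_{m,n} h_{mn}(x_m,x_n) = c' + Σ_m h'_m(x_m) + (1/2) Σ_{m,n} h'_{mn}(x_m,x_n) for all x ∈ X. Then c = c', h_m = h'_m for all m, and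 h_{mn} = h'_{mn} for all m, n. -/
/-!
Subtracting the two families reduces the claim to: normalized components whose HDMR sum vanishes
identically are zero. Summing that sum over all values of one coordinate `x_m` kills every term
involving `x_m` (normalization, with symmetry for the terms where `x_m` is the second argument),
so the part `h_m(x_m) + ∑_{n ≠ m} h_{mn}(x_m, x_n)` that does involve `x_m` vanishes. Summing this
identity once more over a coordinate `x_n`, `n ≠ m`, isolates `h_{mn}(x_m, x_n)`, which therefore
vanishes too; then so do `h_m` and `c`.
-/

open Finset Function

section HDMR

variable {ι : Type*} {X : ι → Type*} {s : Finset ι} {c c' : ℝ}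
  {h1 h1' : ∀ m, X m → ℝ} {h2 h2' : ∀ m n, X m → X n → ℝ}

noncomputable def hdmrSum (s : Finset ι) (c : ℝ) (h1 : ∀ m, X m → ℝ)
    (h2 : ∀ m n, X m → X n → ℝ) (x : ∀ i, X i) : ℝ :=
  c + ∑ m ∈ s, h1 m (x m) + (1 / 2) * ∑ m ∈ s, ∑ n ∈ s, h2 m n (x m) (x n)

theorem hdmrSum_sub (x : ∀ i, X i) :
    hdmrSum s (c - c') (h1 - h1') (h2 - h2') x =
      hdmrSum s c h1 h2 x - hdmrSum s c' h1' h2' x := by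
  simp only [hdmrSum, Pi.sub_apply, sum_sub_distrib]
  ring

section Update

variable [DecidableEq ι] {m : ι}

theorem hdmrSum_update_of_notMem (hm : m ∉ s) (x : ∀ i, X i) (t : X m) :
    hdmrSum s c h1 h2 (update x m t) = hdmrSum s c h1 h2 x := by
  have hx : ∀ j ∈ s, update x m t j = x j :=
    fun j hj => update_of_ne (ne_of_mem_of_not_mem hj hm) _ _
  unfold hdmrSum
  congr 2
  · exact sum_congr rfl fun j hj => by rw [hx j hj]
  · exact sum_congr rfl fun j hj => sum_congr rfl fun n hn => by rw [hx j hj, hx n hn]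

theorem centered_eq_zero_of_add_eq_zero [Fintype (X m)] [Nonempty (X m)]
    {R : (∀ i, X i) → ℝ} {φ : (∀ i, X i) → X m → ℝ}
    (hR : ∀ x t, R (update x m t) = R x) (hφ : ∀ x t, φ (update x m t) = φ x)
    (hφ_sum : ∀ x, ∑ t, φ x t = 0) (h : ∀ x, R x + φ x (x m) = 0) (x : ∀ i, X i) :
    φ x (x m) = 0 := by
  have hsum : ∑ t : X m, (R x + φ x t) = 0 :=
    sum_eq_zero fun t _ => by simpa [hR, hφ] using h (update x m t)
  rw [sum_add_distrib, hφ_sum, sum_const, card_univ, nsmul_eq_mul, add_zero,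
    mul_eq_zero] at hsum
  have hR0 : R x = 0 := hsum.resolve_left (by exact_mod_cast Fintype.card_ne_zero)
  linarith [h x]

end Update

section Normalized

variable [∀ i, Fintype (X i)]

structure IsHDMRNormalized (h1 : ∀ m, X m → ℝ) (h2 : ∀ m n, X m → X n → ℝ) : Prop where
  diag : ∀ m (xm xm' : X m), h2 m m xm xm' = 0
  symm : ∀ m n (xm : X m) (xn : X n), h2 m n xm xn = h2 n m xn xm
  sum_first : ∀ m, ∑ xm : X m, h1 m xm = 0
  sum_second : ∀ m n, m ≠ n → ∀ xn : X n, ∑ xm : X m, h2 m n xm xn = 0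

theorem IsHDMRNormalized.sub (h : IsHDMRNormalized h1 h2) (h' : IsHDMRNormalized h1' h2') :
    IsHDMRNormalized (h1 - h1') (h2 - h2') where
  diag m xm xm' := by simp [h.diag, h'.diag]
  symm m n xm xn := by simp [h.symm m n, h'.symm m n]
  sum_first m := by simp [sum_sub_distrib, h.sum_first, h'.sum_first]
  sum_second m n hmn xn := by
    simp [sum_sub_distrib, h.sum_second m n hmn, h'.sum_second m n hmn]

variable [DecidableEq ι]

theorem hdmrSum_insert {m : ι} (hm : m ∉ s) (hg : IsHDMRNormalized h1 h2) (x : ∀ i, X i) :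
    hdmrSum (insert m s) c h1 h2 x =
      hdmrSum s c h1 h2 x + (h1 m (x m) + ∑ n ∈ s, h2 m n (x m) (x n)) := by
  have hcol : ∑ j ∈ s, h2 j m (x j) (x m) = ∑ n ∈ s, h2 m n (x m) (x n) :=
    sum_congr rfl fun j _ => hg.symm j m _ _
  simp only [hdmrSum, sum_insert hm, hg.diag, sum_add_distrib, hcol]
  ring

variable [∀ i, Nonempty (X i)] [Fintype ι] {a : ℝ} {g1 : ∀ m, X m → ℝ}
  {g2 : ∀ m n, X m → X n → ℝ}

theorem IsHDMRNormalized.apply_add_sum_erase_eq_zero (hg : IsHDMRNormalized g1 g2)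
    (h : ∀ x, hdmrSum univ a g1 g2 x = 0) (x : ∀ i, X i) (m : ι) :
    g1 m (x m) + ∑ n ∈ univ.erase m, g2 m n (x m) (x n) = 0 := by
  have hm : m ∉ univ.erase m := notMem_erase m univ
  refine centered_eq_zero_of_add_eq_zero (m := m) (R := hdmrSum (univ.erase m) a g1 g2)
    (φ := fun x t => g1 m t + ∑ n ∈ univ.erase m, g2 m n t (x n))
    (hdmrSum_update_of_notMem hm) (fun x t => ?_) (fun x => ?_) (fun x => ?_) x
  · funext u
    exact congrArg _ (sum_congr rfl fun n hn => by rw [update_of_ne (ne_of_mem_erase hn)])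
  · rw [sum_add_distrib, hg.sum_first, sum_comm, zero_add]
    exact sum_eq_zero fun n hn => hg.sum_second m n (ne_of_mem_erase hn).symm (x n)
  · rw [← hdmrSum_insert hm hg, insert_erase (mem_univ m), h]

theorem IsHDMRNormalized.apply_apply_eq_zero_of_ne (hg : IsHDMRNormalized g1 g2)
    (h : ∀ x, hdmrSum univ a g1 g2 x = 0) (x : ∀ i, X i) {m n : ι} (hmn : m ≠ n) :
    g2 m n (x m) (x n) = 0 := by
  have hn : n ∈ univ.erase m := mem_erase.2 ⟨hmn.symm, mem_univ n⟩
  refine centered_eq_zero_of_add_eq_zero (m := n)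
    (R := fun x => g1 m (x m) + ∑ k ∈ (univ.erase m).erase n, g2 m k (x m) (x k))
    (φ := fun x t => g2 m n (x m) t) (fun x t => ?_) (fun x t => ?_) (fun x => ?_)
    (fun x => ?_) x
  · simp only [update_of_ne hmn]
    exact congrArg _ (sum_congr rfl fun k hk => by rw [update_of_ne (ne_of_mem_erase hk)])
  · simp only [update_of_ne hmn]
  · simp only [hg.symm m n]
    exact hg.sum_second n m hmn.symm (x m)
  · rw [add_assoc, add_comm (∑ _ ∈ _, _), add_sum_erase _ (fun k => g2 m k (x m) (x k)) hn]
    exact hg.apply_add_sum_erase_eq_zero h x m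

theorem IsHDMRNormalized.eq_zero_of_hdmrSum_eq_zero (hg : IsHDMRNormalized g1 g2)
    (h : ∀ x, hdmrSum univ a g1 g2 x = 0) :
    a = 0 ∧ (∀ m xm, g1 m xm = 0) ∧ ∀ m n xm xn, g2 m n xm xn = 0 := by
  let x₀ : ∀ i, X i := fun _ => Classical.arbitrary _
  have h2 : ∀ m n xm xn, g2 m n xm xn = 0 := by
    intro m n xm xn
    obtain rfl | hmn := eq_or_ne m n
    · exact hg.diag m xm xn
    · simpa [update_of_ne hmn] using
        hg.apply_apply_eq_zero_of_ne h (update (update x₀ m xm) n xn) hmn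
  have h1 : ∀ m xm, g1 m xm = 0 := fun m xm => by
    simpa [h2] using hg.apply_add_sum_erase_eq_zero h (update x₀ m xm) m
  exact ⟨by simpa [hdmrSum, h1, h2] using h x₀, h1, h2⟩

end Normalized

end HDMR

/-- Two families of second-order HDMR components (with zero diagonal,
symmetric second-order components) that both satisfy the zero-mean / zero-marginal
normalization conditions and whose HDMR sums coincide pointwise must be equal
component-wise. -/
theorem hdmr_components_unique
    (d : ℕ) (X : Fin d → Type) [∀ i, Fintype (X i)] [∀ i, Nonempty (X i)]
    (c c' : ℝ) (h1 h1' : ∀ m : Fin d, X m → ℝ)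
    (h2 h2' : ∀ m n : Fin d, X m → X n → ℝ)
    (hdiag : ∀ (m : Fin d) (xm xm' : X m), h2 m m xm xm' = 0)
    (hdiag' : ∀ (m : Fin d) (xm xm' : X m), h2' m m xm xm' = 0)
    (hsymm : ∀ (m n : Fin d) (xm : X m) (xn : X n), h2 m n xm xn = h2 n m xn xm)
    (hsymm' : ∀ (m n : Fin d) (xm : X m) (xn : X n), h2' m n xm xn = h2' n m xn xm)
    (hzero1 : ∀ m : Fin d, ∑ xm : X m, h1 m xm = 0)
    (hzero1' : ∀ m : Fin d, ∑ xm : X m, h1' m xm = 0)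
    (hzero2 : ∀ (m n : Fin d), m ≠ n → ∀ xn : X n, ∑ xm : X m, h2 m n xm xn = 0)
    (hzero2' : ∀ (m n : Fin d), m ≠ n → ∀ xn : X n, ∑ xm : X m, h2' m n xm xn = 0)
    (hsum : ∀ x : ∀ i, X i,
      c + ∑ m, h1 m (x m) + (1 / 2) * ∑ m, ∑ n, h2 m n (x m) (x n) =
      c' + ∑ m, h1' m (x m) + (1 / 2) * ∑ m, ∑ n, h2' m n (x m) (x n)) :
    c = c' ∧
    (∀ (m : Fin d) (xm : X m), h1 m xm = h1' m xm) ∧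
    (∀ (m n : Fin d) (xm : X m) (xn : X n), h2 m n xm xn = h2' m n xm xn) := by
  have hn : IsHDMRNormalized h1 h2 := ⟨hdiag, hsymm, hzero1, hzero2⟩
  have hn' : IsHDMRNormalized h1' h2' := ⟨hdiag', hsymm', hzero1', hzero2'⟩
  obtain ⟨hc, hh1, hh2⟩ := (hn.sub hn').eq_zero_of_hdmrSum_eq_zero fun x => by
    rw [hdmrSum_sub, sub_eq_zero]
    exact hsum x
  exact ⟨sub_eq_zero.1 hc, fun m xm => sub_eq_zero.1 (hh1 m xm),
    fun m n xm xn => sub_eq_zero.1 (hh2 m n xm xn)⟩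
end

section
/- Let X = ∏_{i=1}^d X_i be a finite product of nonempty finite sets, R ⊆ X a subset, g : X → ℝ, and m ≠ n. Assume that for every (x_m, x_n) ∈ X_m × X_n the marginal count M_{mn}[χ_R](x_m,x_n) is positive. Let g̃_∅ = M_∅[χ_R·g]/M_∅[χ_R], g̃_m(x_m) = M_m[χ_R·g](x_m)/M_m[χ_R](x_m) − g̃_∅, and g̃_n(x_n) = M_n[χ_R·g](x_n)/M_n[χ_R](x_n) − g̃_∅. Then the function g̃_{mn}(x_m,x_n) = M_{mn}[χ_R·g](x_m,x_n)/M_{mn}[χ_R](x_m,x_n) − g̃_m(x_m) − g̃_n(x_n) − g̃_∅ minimizes the weighted approximation error ‖g − g̃_∅ − g̃_m − g̃_n − h‖²_{χ_R} = Σ_{x ∈ R} (g(x) − g̃_∅ − g̃_m(x_m) − g̃_n(x_n) − h(x_m,x_n))² over all functions h : X_m × X_n → ℝ. -/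
/-!
Writing `v = g̃_∅ + g̃_m + g̃_n + h`, the error is `∑_{x ∈ R} (g x - v (x_m, x_n))²`, so it suffices
that `g̃_∅ + g̃_m + g̃_n + g̃_{mn}` is the mean of `g` over each fiber
`{x ∈ R | (x_m, x_n) = (a, b)}`: the residual of the fiberwise mean is orthogonal to every
function of `(x_m, x_n)`, and Pythagoras does the rest. The marginal sums over all of `X`, with
coordinates `m` and `n` overwritten, count each point of such a fiber `|X_m| |X_n|` times, so
their ratio `M_{mn}[χ_R g] / M_{mn}[χ_R]` is exactly that mean (an empty fiber does not
contribute to the error, whatever the junk value of the ratio there).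
-/

open Finset Function
open scoped BigOperators

section FiberMean

variable {α β K : Type*} [DecidableEq β] [Field K]

theorem sum_sub_expect_fiber_mul_eq_zero [CharZero K] (s : Finset α) (p : α → β) (f : α → K)
    (u : β → K) :
    ∑ x ∈ s, (f x - 𝔼 y ∈ s with p y = p x, f y) * u (p x) = 0 := by
  rw [← sum_fiberwise_of_maps_to fun x hx => mem_image_of_mem p hx]
  refine sum_eq_zero fun b _ => ?_
  calc ∑ x ∈ s with p x = b, (f x - 𝔼 y ∈ s with p y = p x, f y) * u (p x)
      = ∑ x ∈ s with p x = b, (f x - 𝔼 y ∈ s with p y = b, f y) * u b :=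
        sum_congr rfl fun x hx => by rw [(mem_filter.1 hx).2]
    _ = 0 := by rw [← sum_mul, sum_sub_distrib, sum_const, card_smul_expect, sub_self, zero_mul]

theorem sum_sq_sub_expect_fiber_le [LinearOrder K] [IsStrictOrderedRing K] (s : Finset α)
    (p : α → β) (f : α → K) (v : β → K) :
    ∑ x ∈ s, (f x - 𝔼 y ∈ s with p y = p x, f y) ^ 2 ≤ ∑ x ∈ s, (f x - v (p x)) ^ 2 := by
  set w : β → K := fun b => 𝔼 y ∈ s with p y = b, f y - v b
  calc ∑ x ∈ s, (f x - 𝔼 y ∈ s with p y = p x, f y) ^ 2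
      ≤ ∑ x ∈ s, (f x - 𝔼 y ∈ s with p y = p x, f y) ^ 2
          + 2 * ∑ x ∈ s, (f x - 𝔼 y ∈ s with p y = p x, f y) * w (p x)
          + ∑ x ∈ s, w (p x) ^ 2 := by
        rw [sum_sub_expect_fiber_mul_eq_zero, mul_zero, add_zero]
        exact le_add_of_nonneg_right (sum_nonneg fun x _ => sq_nonneg _)
    _ = ∑ x ∈ s, (f x - v (p x)) ^ 2 := by
        rw [mul_sum, ← sum_add_distrib, ← sum_add_distrib]
        exact sum_congr rfl fun x _ => by ring

end FiberMean

section UpdateSums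

variable {ι M : Type*} [Fintype ι] [DecidableEq ι] {X : ι → Type*} [∀ i, Fintype (X i)]
  [∀ i, DecidableEq (X i)] [AddCommMonoid M]

theorem sum_update_eq_card_smul_sum_filter (i : ι) (a : X i) (F : (∀ j, X j) → M) :
    ∑ y, F (update y i a) = Fintype.card (X i) • ∑ y with y i = a, F y := by
  rw [← sum_fiberwise univ (fun y => y i), ← card_univ, ← sum_const]
  refine sum_congr rfl fun c _ => ?_
  -- `update · i a` maps the fiber `y i = c` bijectively onto the fiber `y i = a`
  exact sum_nbij' (update · i a) (update · i c) (by simp_all) (by simp_all) (by simp_all)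
    (by simp_all) (by simp_all)

theorem sum_update_update_eq_card_mul_card_smul_sum_filter {m n : ι} (hmn : m ≠ n) (a : X m)
    (b : X n) (F : (∀ j, X j) → M) :
    ∑ y, F (update (update y m a) n b) =
      (Fintype.card (X m) * Fintype.card (X n)) • ∑ y with y m = a ∧ y n = b, F y := by
  set G : (∀ j, X j) → M := fun z => if z m = a then F z else 0
  calc ∑ y, F (update (update y m a) n b)
      = Fintype.card (X m) • ∑ y with y m = a, F (update y n b) :=
        sum_update_eq_card_smul_sum_filter m a fun z => F (update z n b)
    _ = Fintype.card (X m) • ∑ y, G (update y n b) := by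
        rw [sum_filter]; simp only [G, update_of_ne hmn]
    _ = Fintype.card (X m) • Fintype.card (X n) • ∑ y with y n = b, G y := by
        rw [sum_update_eq_card_smul_sum_filter n b G]
    _ = _ := by
        rw [smul_smul, ← sum_filter, filter_filter]
        simp_rw [and_comm]

theorem sum_update_update_ite_mem {m n : ι} (hmn : m ≠ n) (a : X m) (b : X n)
    (R : Finset (∀ j, X j)) [DecidablePred (· ∈ R)] (G : (∀ j, X j) → M) :
    ∑ y, (if update (update y m a) n b ∈ R then G (update (update y m a) n b) else 0) =
      (Fintype.card (X m) * Fintype.card (X n)) • ∑ x ∈ R with x m = a ∧ x n = b, G x := by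
  rw [sum_update_update_eq_card_mul_card_smul_sum_filter hmn a b
    fun z => if z ∈ R then G z else 0, ← sum_filter]
  congr 2
  ext x
  simp only [mem_filter, mem_univ, true_and, and_comm]

end UpdateSums

theorem weighted_hdmr_second_order_optimal_general
    (d : ℕ) (X : Fin d → Type) [∀ i, Fintype (X i)] [∀ i, Nonempty (X i)]
    [DecidableEq (∀ i, X i)]
    (R : Finset (∀ i, X i)) (g : (∀ i, X i) → ℝ) (m n : Fin d) (hmn : m ≠ n)
    (Mchimn : X m → X n → ℝ) (Mgmn : X m → X n → ℝ)
    (hMchimn : ∀ (xm : X m) (xn : X n),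
      Mchimn xm xn = ∑ y : ∀ i, X i,
        (if Function.update (Function.update y m xm) n xn ∈ R then (1 : ℝ) else 0))
    (hMgmn : ∀ (xm : X m) (xn : X n),
      Mgmn xm xn = ∑ y : ∀ i, X i,
        (if Function.update (Function.update y m xm) n xn ∈ R then
          g (Function.update (Function.update y m xm) n xn) else 0))
    (g0 : ℝ) (g1m : X m → ℝ) (g1n : X n → ℝ) (g2 : X m → X n → ℝ)
    (hg2 : ∀ (xm : X m) (xn : X n),
      g2 xm xn = Mgmn xm xn / Mchimn xm xn - g1m xm - g1n xn - g0) :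
    ∀ h : X m → X n → ℝ,
      ∑ x ∈ R, (g x - g0 - g1m (x m) - g1n (x n) - g2 (x m) (x n)) ^ 2 ≤
        ∑ x ∈ R, (g x - g0 - g1m (x m) - g1n (x n) - h (x m) (x n)) ^ 2 := by
  classical
  intro h
  have hmean : ∀ a b, Mgmn a b / Mchimn a b = 𝔼 x ∈ R with (x m, x n) = (a, b), g x := by
    intro a b
    have hK : ((Fintype.card (X m) * Fintype.card (X n) : ℕ) : ℝ) ≠ 0 := by positivity
    rw [hMgmn, hMchimn, sum_update_update_ite_mem hmn a b R g,
      sum_update_update_ite_mem hmn a b R fun _ => (1 : ℝ),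
      nsmul_eq_mul, nsmul_eq_mul, mul_div_mul_left _ _ hK, expect_eq_sum_div_card, sum_const,
      nsmul_one]
    simp only [Prod.mk.injEq]
  calc ∑ x ∈ R, (g x - g0 - g1m (x m) - g1n (x n) - g2 (x m) (x n)) ^ 2
      = ∑ x ∈ R, (g x - 𝔼 y ∈ R with (y m, y n) = (x m, x n), g y) ^ 2 :=
        sum_congr rfl fun x _ => by rw [hg2, hmean]; ring
    _ ≤ ∑ x ∈ R, (g x - (g0 + g1m (x m) + g1n (x n) + h (x m) (x n))) ^ 2 :=
        sum_sq_sub_expect_fiber_le R (fun x => (x m, x n)) g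
          fun p => g0 + g1m p.1 + g1n p.2 + h p.1 p.2
    _ = _ := sum_congr rfl fun x _ => by ring

/-- For a subset `R ⊆ X` with positive second-order marginal counts
`M_{mn}[χ_R](x_m,x_n) > 0` (m ≠ n), the weighted ANOVA second-order component
`g̃_{mn}(x_m,x_n) = M_{mn}[χ_R·g]/M_{mn}[χ_R] − g̃_m(x_m) − g̃_n(x_n) − g̃_∅`
minimizes the weighted error
`∑_{x ∈ R} (g x − g̃_∅ − g̃_m (x m) − g̃_n (x n) − h (x m) (x n))²`
over all `h : X m → X n → ℝ`. (Marginals over `X_I^⊥` are encoded as full-domain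
sums with the relevant coordinates replaced; numerator and denominator of each
ratio are thereby scaled by the same factor, leaving ratios and positivity
conditions unchanged.) -/
theorem weighted_hdmr_second_order_optimal
    (d : ℕ) (X : Fin d → Type) [∀ i, Fintype (X i)] [∀ i, Nonempty (X i)]
    [DecidableEq (∀ i, X i)]
    (R : Finset (∀ i, X i)) (g : (∀ i, X i) → ℝ) (m n : Fin d) (hmn : m ≠ n)
    (Mchim : X m → ℝ) (Mgm : X m → ℝ) (Mchin : X n → ℝ) (Mgn : X n → ℝ)
    (Mchimn : X m → X n → ℝ) (Mgmn : X m → X n → ℝ)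
    (hMchim : ∀ xm : X m,
      Mchim xm = ∑ y : ∀ i, X i, (if Function.update y m xm ∈ R then (1 : ℝ) else 0))
    (hMgm : ∀ xm : X m,
      Mgm xm = ∑ y : ∀ i, X i,
        (if Function.update y m xm ∈ R then g (Function.update y m xm) else 0))
    (hMchin : ∀ xn : X n,
      Mchin xn = ∑ y : ∀ i, X i, (if Function.update y n xn ∈ R then (1 : ℝ) else 0))
    (hMgn : ∀ xn : X n,
      Mgn xn = ∑ y : ∀ i, X i,
        (if Function.update y n xn ∈ R then g (Function.update y n xn) else 0))
    (hMchimn : ∀ (xm : X m) (xn : X n),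
      Mchimn xm xn = ∑ y : ∀ i, X i,
        (if Function.update (Function.update y m xm) n xn ∈ R then (1 : ℝ) else 0))
    (hMgmn : ∀ (xm : X m) (xn : X n),
      Mgmn xm xn = ∑ y : ∀ i, X i,
        (if Function.update (Function.update y m xm) n xn ∈ R then
          g (Function.update (Function.update y m xm) n xn) else 0))
    (hpos : ∀ (xm : X m) (xn : X n), 0 < Mchimn xm xn)
    (g0 : ℝ) (hg0 : g0 = (∑ x ∈ R, g x) / (R.card : ℝ))
    (g1m : X m → ℝ) (hg1m : ∀ xm : X m, g1m xm = Mgm xm / Mchim xm - g0)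
    (g1n : X n → ℝ) (hg1n : ∀ xn : X n, g1n xn = Mgn xn / Mchin xn - g0)
    (g2 : X m → X n → ℝ)
    (hg2 : ∀ (xm : X m) (xn : X n),
      g2 xm xn = Mgmn xm xn / Mchimn xm xn - g1m xm - g1n xn - g0) :
    ∀ h : X m → X n → ℝ,
      ∑ x ∈ R, (g x - g0 - g1m (x m) - g1n (x n) - g2 (x m) (x n)) ^ 2 ≤
        ∑ x ∈ R, (g x - g0 - g1m (x m) - g1n (x n) - h (x m) (x n)) ^ 2 :=
  weighted_hdmr_second_order_optimal_general d X R g m n hmn Mchimn Mgmn hMchimn hMgmn g0 g1m g1n g2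
    hg2
end

section
/- Let X = ∏_{n=1}^κ X_n and Z = ∏_{m=1}^μ Z_m be finite products of nonempty finite sets, and let components g̃_{mn} : Z_m × Z_n → ℝ (with g̃_{mm}=0), g̃_m : Z_m → ℝ, g̃_{μ+n,m} : X_n × Z_m → ℝ satisfy: Σ_{z_m ∈ Z_m} g̃_m(z_m) = 0 for all m; Σ_{z_m ∈ Z_m} g̃_{mn}(z_m, z_n) = 0 for all m ≠ n and every fixed z_n; and Σ_{z_m ∈ Z_m} g̃_{μ+n,m}(x_n, z_m) = 0 for every fixed x_n. Let F, G, h and γ(u,v) = (1/2) vᵀFv + hᵀv + uᵀGv be built from these components as in the indicator encoding. Then for every x ∈ X and z ∈ Z, γ(u(x), v°(z)) = γ(u(x), v(z)), where v(z) is the 0/1 indicator encoding and v°(z) the shifted indicator encoding; i.e. the minimized criterion does not depend on the average value of any subvector. -/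
open Matrix

/-! The shifted encoding is `v°(z) = v(z) - c`, where `c` is constant on each block
`{m} × Z m`. The zero-marginal conditions say precisely that every block of `F`, `G` and `h`
sums to zero along each row and column (the diagonal blocks of `F` vanish outright), so `F`,
`Fᵀ`, `G` and `h` all annihilate such block-constant vectors, and every term of `γ(u, v - c)`
involving `c` drops out. -/

section BlockConst

variable {R : Type*} [CommSemiring R] {ι α : Type*} [Fintype ι] {κ : ι → Type*}
  [∀ i, Fintype (κ i)]

variable (κ) in
def blockConst (f : ι → R) : (Σ i, κ i) → R := fun p => f p.1

theorem dotProduct_blockConst (w : (Σ i, κ i) → R) (f : ι → R) :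
    w ⬝ᵥ blockConst κ f = ∑ i, (∑ b, w ⟨i, b⟩) * f i := by
  simp only [dotProduct, blockConst, ← Finset.univ_sigma_univ, Finset.sum_sigma, Finset.sum_mul]

theorem dotProduct_blockConst_eq_zero {w : (Σ i, κ i) → R} (hw : ∀ i, ∑ b, w ⟨i, b⟩ = 0)
    (f : ι → R) : w ⬝ᵥ blockConst κ f = 0 := by
  simp [dotProduct_blockConst, hw]

theorem mulVec_blockConst_eq_zero {A : Matrix α (Σ i, κ i) R}
    (hA : ∀ a i, ∑ b, A a ⟨i, b⟩ = 0) (f : ι → R) : A *ᵥ blockConst κ f = 0 :=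
  funext fun a => dotProduct_blockConst_eq_zero (hA a) f

theorem blockConst_vecMul_eq_zero {A : Matrix (Σ i, κ i) α R}
    (hA : ∀ a i, ∑ b, A ⟨i, b⟩ a = 0) (f : ι → R) : blockConst κ f ᵥ* A = 0 :=
  funext fun a => by rw [vecMul, dotProduct_comm]; exact dotProduct_blockConst_eq_zero (hA a) f

end BlockConst

section Criterion

variable {K : Type*} [Field K] {ι ξ : Type*} [Fintype ι] [Fintype ξ]

def criterion (F : Matrix ι ι K) (G : Matrix ξ ι K) (h : ι → K) (u : ξ → K) (v : ι → K) : K :=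
  (1 / 2) * (v ⬝ᵥ F *ᵥ v) + h ⬝ᵥ v + u ⬝ᵥ G *ᵥ v

theorem criterion_sub_eq {F : Matrix ι ι K} {G : Matrix ξ ι K} {h : ι → K} {c : ι → K}
    (hFc : F *ᵥ c = 0) (hcF : c ᵥ* F = 0) (hhc : h ⬝ᵥ c = 0) (hGc : G *ᵥ c = 0)
    (u : ξ → K) (v : ι → K) : criterion F G h u (v - c) = criterion F G h u v := by
  simp only [criterion, mulVec_sub, hFc, hGc, sub_zero, dotProduct_sub, sub_dotProduct, hhc,
    dotProduct_mulVec c, hcF, zero_dotProduct]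

end Criterion

theorem criterion_invariant_under_shift_general
    (κ μ : ℕ) (X : Fin κ → Type) (Z : Fin μ → Type)
    [∀ n, Fintype (X n)]
    [∀ m, Fintype (Z m)] [∀ m, DecidableEq (Z m)]
    (gZZ : ∀ m n : Fin μ, Z m → Z n → ℝ)
    (gZ : ∀ m : Fin μ, Z m → ℝ)
    (gXZ : ∀ (n : Fin κ) (m : Fin μ), X n → Z m → ℝ)
    (hdiag : ∀ (m : Fin μ) (a b : Z m), gZZ m m a b = 0)
    (hsymm : ∀ (m n : Fin μ) (a : Z m) (b : Z n), gZZ m n a b = gZZ n m b a)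
    (hzero1 : ∀ m : Fin μ, ∑ zm : Z m, gZ m zm = 0)
    (hzero2 : ∀ (m n : Fin μ), m ≠ n → ∀ zn : Z n, ∑ zm : Z m, gZZ m n zm zn = 0)
    (hzeroXZ : ∀ (n : Fin κ) (m : Fin μ) (xn : X n), ∑ zm : Z m, gXZ n m xn zm = 0)
    (F : Matrix ((m : Fin μ) × Z m) ((m : Fin μ) × Z m) ℝ)
    (hF : ∀ p q : (m : Fin μ) × Z m, F p q = gZZ p.1 q.1 p.2 q.2)
    (G : Matrix ((n : Fin κ) × X n) ((m : Fin μ) × Z m) ℝ)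
    (hG : ∀ (p : (n : Fin κ) × X n) (q : (m : Fin μ) × Z m), G p q = gXZ p.1 q.1 p.2 q.2)
    (h : ((m : Fin μ) × Z m) → ℝ)
    (hh : ∀ p : (m : Fin μ) × Z m, h p = gZ p.1 p.2)
    (v : (∀ m, Z m) → ((m : Fin μ) × Z m) → ℝ)
    (hv : ∀ (z : ∀ m, Z m) (p : (m : Fin μ) × Z m),
      v z p = if p.2 = z p.1 then (1 : ℝ) else 0)
    (v' : (∀ m, Z m) → ((m : Fin μ) × Z m) → ℝ)
    (hv' : ∀ (z : ∀ m, Z m) (p : (m : Fin μ) × Z m),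
      v' z p = (if p.2 = z p.1 then (1 : ℝ) else 0) - 1 / (Fintype.card (Z p.1) : ℝ))
    (u : (∀ n, X n) → ((n : Fin κ) × X n) → ℝ) :
    ∀ (x : ∀ n, X n) (z : ∀ m, Z m),
      (1 / 2) * (v' z ⬝ᵥ F.mulVec (v' z)) + h ⬝ᵥ v' z + u x ⬝ᵥ G.mulVec (v' z) =
      (1 / 2) * (v z ⬝ᵥ F.mulVec (v z)) + h ⬝ᵥ v z + u x ⬝ᵥ G.mulVec (v z) := by
  intro x z
  have hcol : ∀ (q : (m : Fin μ) × Z m) m, ∑ a, F ⟨m, a⟩ q = 0 := fun q m => by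
    simp only [hF]
    rcases eq_or_ne m q.1 with rfl | hne
    · simp [hdiag]
    · exact hzero2 m q.1 hne q.2
  have hrow : ∀ (p : (m : Fin μ) × Z m) n, ∑ b, F p ⟨n, b⟩ = 0 := fun p n => by
    simpa only [hF, hsymm p.1] using hcol p n
  have hv'_eq : v' z = v z - blockConst Z fun m => 1 / (Fintype.card (Z m) : ℝ) :=
    funext fun p => by rw [hv', Pi.sub_apply, hv]; rfl
  rw [hv'_eq]
  exact criterion_sub_eq (mulVec_blockConst_eq_zero hrow _) (blockConst_vecMul_eq_zero hcol _)
    (dotProduct_blockConst_eq_zero (fun m => by simp only [hh, hzero1]) _)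
    (mulVec_blockConst_eq_zero (fun p m => by simp only [hG, hzeroXZ]) _) (u x) (v z)

/-- If the HDMR components satisfy the zero-mean / zero-marginal
conditions (and, as for HDMR components of a single function, the second-order
components are symmetric with zero diagonal), then the quadratic criterion
`γ(u,v) = (1/2) vᵀFv + hᵀv + uᵀGv` takes the same value on the 0/1 indicator
encoding `v(z)` and on the shifted indicator encoding `v°(z)`: the criterion does
not depend on the average value of any subvector. -/
theorem criterion_invariant_under_shift
    (κ μ : ℕ) (X : Fin κ → Type) (Z : Fin μ → Type)
    [∀ n, Fintype (X n)] [∀ n, Nonempty (X n)] [∀ n, DecidableEq (X n)]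
    [∀ m, Fintype (Z m)] [∀ m, Nonempty (Z m)] [∀ m, DecidableEq (Z m)]
    (gZZ : ∀ m n : Fin μ, Z m → Z n → ℝ)
    (gZ : ∀ m : Fin μ, Z m → ℝ)
    (gXZ : ∀ (n : Fin κ) (m : Fin μ), X n → Z m → ℝ)
    (hdiag : ∀ (m : Fin μ) (a b : Z m), gZZ m m a b = 0)
    (hsymm : ∀ (m n : Fin μ) (a : Z m) (b : Z n), gZZ m n a b = gZZ n m b a)
    (hzero1 : ∀ m : Fin μ, ∑ zm : Z m, gZ m zm = 0)
    (hzero2 : ∀ (m n : Fin μ), m ≠ n → ∀ zn : Z n, ∑ zm : Z m, gZZ m n zm zn = 0)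
    (hzeroXZ : ∀ (n : Fin κ) (m : Fin μ) (xn : X n), ∑ zm : Z m, gXZ n m xn zm = 0)
    (F : Matrix ((m : Fin μ) × Z m) ((m : Fin μ) × Z m) ℝ)
    (hF : ∀ p q : (m : Fin μ) × Z m, F p q = gZZ p.1 q.1 p.2 q.2)
    (G : Matrix ((n : Fin κ) × X n) ((m : Fin μ) × Z m) ℝ)
    (hG : ∀ (p : (n : Fin κ) × X n) (q : (m : Fin μ) × Z m), G p q = gXZ p.1 q.1 p.2 q.2)
    (h : ((m : Fin μ) × Z m) → ℝ)
    (hh : ∀ p : (m : Fin μ) × Z m, h p = gZ p.1 p.2)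
    (v : (∀ m, Z m) → ((m : Fin μ) × Z m) → ℝ)
    (hv : ∀ (z : ∀ m, Z m) (p : (m : Fin μ) × Z m),
      v z p = if p.2 = z p.1 then (1 : ℝ) else 0)
    (v' : (∀ m, Z m) → ((m : Fin μ) × Z m) → ℝ)
    (hv' : ∀ (z : ∀ m, Z m) (p : (m : Fin μ) × Z m),
      v' z p = (if p.2 = z p.1 then (1 : ℝ) else 0) - 1 / (Fintype.card (Z p.1) : ℝ))
    (u : (∀ n, X n) → ((n : Fin κ) × X n) → ℝ)
    (hu : ∀ (x : ∀ n, X n) (p : (n : Fin κ) × X n),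
      u x p = if p.2 = x p.1 then (1 : ℝ) else 0) :
    ∀ (x : ∀ n, X n) (z : ∀ m, Z m),
      (1 / 2) * (v' z ⬝ᵥ F.mulVec (v' z)) + h ⬝ᵥ v' z + u x ⬝ᵥ G.mulVec (v' z) =
      (1 / 2) * (v z ⬝ᵥ F.mulVec (v z)) + h ⬝ᵥ v z + u x ⬝ᵥ G.mulVec (v z) :=
  criterion_invariant_under_shift_general κ μ X Z gZZ gZ gXZ hdiag hsymm hzero1 hzero2 hzeroXZ F hF
    G hG h hh v hv v' hv' u
end

section
/- Let D be a real diagonal θ×θ matrix with diagonal entries D_{11} ≤ D_{22} ≤ … ≤ D_{θθ}, let b ∈ ℝ^θ be nonzero, let k be the index of the first nonzero entry of b, and let r > 0. Then there exists exactly one λ ∈ (−∞, D_{kk}) such that Σ_{i=k}^θ (b_i/(D_{ii} − λ))² = r². -/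
/-- Secular equation of the trust region problem. For a diagonal
matrix with nondecreasing diagonal `D`, a nonzero vector `b` whose first nonzero
entry is at index `k`, and `r > 0`, there is exactly one `λ ∈ (−∞, D k)` with
`∑_{i ≥ k} (b i / (D i − λ))² = r²`. -/
theorem secular_equation_unique_solution
    (θ : ℕ) (D : Fin θ → ℝ) (hD : Monotone D)
    (b : Fin θ → ℝ) (k : Fin θ)
    (hbk : b k ≠ 0) (hfirst : ∀ i : Fin θ, i < k → b i = 0)
    (r : ℝ) (hr : 0 < r) :
    ∃! lam : ℝ, lam < D k ∧
      ∑ i ∈ Finset.univ.filter (fun i : Fin θ => k ≤ i), (b i / (D i - lam)) ^ 2 = r ^ 2 := by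
  classical
  set S := Finset.univ.filter (fun i : Fin θ => k ≤ i) with hS
  set f : ℝ → ℝ := fun lam => ∑ i ∈ S, (b i / (D i - lam)) ^ 2 with hf
  have hkS : k ∈ S := by simp [hS]
  have hpos : ∀ i ∈ S, ∀ lam : ℝ, lam < D k → 0 < D i - lam := by
    intro i hi lam hlam
    have hki : k ≤ i := by simpa [hS] using hi
    have : D k ≤ D i := hD hki
    linarith
  -- strict monotonicity on Iio (D k)
  have hmono : StrictMonoOn f (Set.Iio (D k)) := by
    intro x hx y hy hxy
    simp only [Set.mem_Iio] at hx hy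
    have key : ∀ i ∈ S, b i ≠ 0 → (b i / (D i - x)) ^ 2 < (b i / (D i - y)) ^ 2 := by
      intro i hi hbi
      have hdx := hpos i hi x hx
      have hdy := hpos i hi y hy
      rw [div_pow, div_pow]
      apply div_lt_div_of_pos_left (by positivity) (by positivity)
      have h1 : D i - y < D i - x := by linarith
      exact pow_lt_pow_left₀ h1 (by linarith) two_ne_zero
    apply Finset.sum_lt_sum
    · intro i hi
      rcases eq_or_ne (b i) 0 with h | h
      · simp [h]
      · exact (key i hi h).le
    · exact ⟨k, hkS, key k hkS hbk⟩
  set C : ℝ := ∑ i ∈ S, (b i) ^ 2 with hC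
  have hbk2 : (0:ℝ) < (b k) ^ 2 := by positivity
  have hCk : (b k) ^ 2 ≤ C :=
    Finset.single_le_sum (f := fun i => (b i)^2) (fun i _ => by positivity) hkS
  have hCpos : 0 < C := lt_of_lt_of_le hbk2 hCk
  set s : ℝ := Real.sqrt C with hs
  have hs0 : 0 ≤ s := Real.sqrt_nonneg C
  have hs2 : s ^ 2 = C := Real.sq_sqrt hCpos.le
  have hsbk : |b k| ≤ s := by
    rw [hs, ← Real.sqrt_sq_eq_abs]
    exact Real.sqrt_le_sqrt hCk
  have habk : 0 < |b k| := abs_pos.mpr hbk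
  set lam0 : ℝ := D k - (s / r + 1) with hlam0
  set lam1 : ℝ := D k - |b k| / (2 * r) with hlam1
  have hl01 : lam0 < lam1 := by
    have h2 : |b k| / (2 * r) ≤ s / r := div_le_div₀ hs0 hsbk hr (by linarith)
    rw [hlam0, hlam1]; linarith
  have hl1 : lam1 < D k := by
    rw [hlam1]
    have : 0 < |b k| / (2 * r) := by positivity
    linarith
  have hl0 : lam0 < D k := lt_trans hl01 hl1
  -- upper bound at lam0
  have hf0 : f lam0 < r ^ 2 := by
    have hd0 : D k - lam0 = s / r + 1 := by rw [hlam0]; ring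
    have hstep : ∀ i ∈ S, (b i / (D i - lam0)) ^ 2 ≤ (b i) ^ 2 / (D k - lam0) ^ 2 := by
      intro i hi
      have hdi := hpos i hi lam0 hl0
      have hdk : 0 < D k - lam0 := by rw [hd0]; positivity
      have hle : D k - lam0 ≤ D i - lam0 := by
        have : D k ≤ D i := hD (by simpa [hS] using hi)
        linarith
      rw [div_pow]
      apply div_le_div_of_nonneg_left (by positivity) (by positivity)
      exact pow_le_pow_left₀ hdk.le hle 2
    have hsum : f lam0 ≤ C / (D k - lam0) ^ 2 := by
      rw [hf, hC, Finset.sum_div]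
      exact Finset.sum_le_sum hstep
    have hfin : C / (D k - lam0) ^ 2 < r ^ 2 := by
      rw [hd0, div_lt_iff₀ (by positivity)]
      have hsr : s / r * r = s := div_mul_cancel₀ s hr.ne'
      nlinarith [hs2, hs0, hr, hsr, sq_nonneg (s / r), div_nonneg hs0 hr.le]
    linarith
  -- lower bound at lam1
  have hf1 : r ^ 2 < f lam1 := by
    have hd1 : D k - lam1 = |b k| / (2 * r) := by rw [hlam1]; ring
    have hterm : (b k / (D k - lam1)) ^ 2 = 4 * r ^ 2 := by
      rw [hd1, div_pow, div_pow, sq_abs, div_div_eq_mul_div, mul_comm]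
      rw [mul_div_assoc, div_self (by positivity), mul_one]
      ring
    have hle : (b k / (D k - lam1)) ^ 2 ≤ f lam1 :=
      Finset.single_le_sum (f := fun i => (b i / (D i - lam1)) ^ 2)
        (fun i _ => by positivity) hkS
    rw [hterm] at hle
    nlinarith
  -- continuity on [lam0, lam1]
  have hsub : Set.Icc lam0 lam1 ⊆ Set.Iio (D k) := by
    intro x hx
    exact lt_of_le_of_lt hx.2 hl1
  have hcont : ContinuousOn f (Set.Icc lam0 lam1) := by
    apply continuousOn_finset_sum
    intro i hi
    apply ContinuousOn.pow
    apply ContinuousOn.div continuousOn_const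
    · exact (continuous_const.sub continuous_id).continuousOn
    · intro x hx
      exact (hpos i hi x (hsub hx)).ne'
  have hivt := intermediate_value_Icc hl01.le hcont
  have hmem : r ^ 2 ∈ Set.Icc (f lam0) (f lam1) := ⟨hf0.le, hf1.le⟩
  obtain ⟨c, hc, hfc⟩ := hivt hmem
  have hcD : c < D k := hsub hc
  refine ⟨c, ⟨hcD, hfc⟩, ?_⟩
  intro y ⟨hyD, hyf⟩
  exact hmono.injOn (Set.mem_Iio.mpr hyD) (Set.mem_Iio.mpr hcD) (hyf.trans hfc.symm)
end

section
/- Let F be a real symmetric θ×θ matrix, c ∈ ℝ^θ, r > 0, and λ ∈ ℝ. Suppose the matrix F − λI is positive semidefinite, and v̂ ∈ ℝ^θ satisfies (F − λI) v̂ = −c and ‖v̂‖ = r. Then v̂ is a global minimizer of the trust region problem: for every v ∈ ℝ^θ with ‖v‖ = r, (1/2) v̂ᵀ F v̂ + cᵀ v̂ ≤ (1/2) vᵀ F v + cᵀ v. -/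
/-!
Write `M = F - λI`. Since `M v̂ = -c` and `M` is symmetric, completing the square gives
`vᵀMv + 2cᵀv = v̂ᵀMv̂ + 2cᵀv̂ + (v - v̂)ᵀM(v - v̂)`, and the last term is nonnegative because
`M` is positive semidefinite. On the sphere `vᵀFv = vᵀMv + λr²`, so the objective differs from
this `M`-objective by the constant `λr²/2`.
-/

open Matrix

namespace Matrix

variable {n R : Type*} [Fintype n] [CommRing R]

theorem dotProduct_mulVec_add_two_mul_eq_of_mulVec_eq_neg {M : Matrix n n R} (hM : M.IsSymm)
    {c w : n → R} (hw : M *ᵥ w = -c) (v : n → R) :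
    v ⬝ᵥ M *ᵥ v + 2 * (c ⬝ᵥ v) =
      w ⬝ᵥ M *ᵥ w + 2 * (c ⬝ᵥ w) + (v - w) ⬝ᵥ M *ᵥ (v - w) := by
  have hcross : w ⬝ᵥ M *ᵥ v = v ⬝ᵥ M *ᵥ w := by
    rw [← dotProduct_transpose_mulVec, hM.eq]
  rw [mulVec_sub, sub_dotProduct, dotProduct_sub, dotProduct_sub, hcross, hw,
    dotProduct_neg, dotProduct_neg, dotProduct_comm v c, dotProduct_comm w c]
  ring

theorem dotProduct_mulVec_eq_sub_smul_one_add [DecidableEq n] (F : Matrix n n R) (lam : R)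
    (x : n → R) :
    x ⬝ᵥ F *ᵥ x = x ⬝ᵥ (F - lam • 1) *ᵥ x + lam * (x ⬝ᵥ x) := by
  rw [sub_mulVec, smul_mulVec, one_mulVec, dotProduct_sub, dotProduct_smul, smul_eq_mul]
  ring

theorem PosSemidef.quadratic_le_of_mulVec_eq_neg [DecidableEq n] {F : Matrix n n ℝ} {lam : ℝ}
    (hpsd : (F - lam • 1).PosSemidef) {c w : n → ℝ} (hw : (F - lam • 1) *ᵥ w = -c)
    {v : n → ℝ} (hvw : v ⬝ᵥ v = w ⬝ᵥ w) :
    (1 / 2) * (w ⬝ᵥ F *ᵥ w) + c ⬝ᵥ w ≤ (1 / 2) * (v ⬝ᵥ F *ᵥ v) + c ⬝ᵥ v := by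
  have hsquare := dotProduct_mulVec_add_two_mul_eq_of_mulVec_eq_neg
    (isHermitian_iff_isSymm.mp hpsd.isHermitian) hw v
  have hnonneg := hpsd.dotProduct_mulVec_nonneg (v - w)
  simp only [star_trivial] at hnonneg
  rw [dotProduct_mulVec_eq_sub_smul_one_add F lam v,
    dotProduct_mulVec_eq_sub_smul_one_add F lam w, hvw]
  linarith

theorem sum_sq_eq_dotProduct_self (x : n → R) : ∑ i, x i ^ 2 = x ⬝ᵥ x := by
  simp only [dotProduct, sq]

end Matrix

theorem trust_region_global_optimality_general
    (θ : ℕ) (F : Matrix (Fin θ) (Fin θ) ℝ)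
    (c : Fin θ → ℝ) (r : ℝ) (lam : ℝ)
    (hpsd : (F - lam • (1 : Matrix (Fin θ) (Fin θ) ℝ)).PosSemidef)
    (vhat : Fin θ → ℝ)
    (heq : (F - lam • (1 : Matrix (Fin θ) (Fin θ) ℝ)).mulVec vhat = -c)
    (hnorm : Real.sqrt (∑ i, vhat i ^ 2) = r) :
    ∀ v : Fin θ → ℝ, Real.sqrt (∑ i, v i ^ 2) = r →
      (1 / 2) * (vhat ⬝ᵥ F.mulVec vhat) + c ⬝ᵥ vhat ≤
        (1 / 2) * (v ⬝ᵥ F.mulVec v) + c ⬝ᵥ v := by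
  intro v hv
  refine hpsd.quadratic_le_of_mulVec_eq_neg heq ?_
  rw [← sum_sq_eq_dotProduct_self, ← sum_sq_eq_dotProduct_self]
  rw [← hnorm] at hv
  exact (Real.sqrt_inj (by positivity) (by positivity)).mp hv

/-- Global optimality condition for the trust region problem. If
`F − λI` is positive semidefinite, `(F − λI) v̂ = −c` and `‖v̂‖ = r`, then `v̂`
minimizes `(1/2) vᵀFv + cᵀv` over the sphere `‖v‖ = r`. -/
theorem trust_region_global_optimality
    (θ : ℕ) (F : Matrix (Fin θ) (Fin θ) ℝ) (hFsymm : F.IsSymm)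
    (c : Fin θ → ℝ) (r : ℝ) (hr : 0 < r) (lam : ℝ)
    (hpsd : (F - lam • (1 : Matrix (Fin θ) (Fin θ) ℝ)).PosSemidef)
    (vhat : Fin θ → ℝ)
    (heq : (F - lam • (1 : Matrix (Fin θ) (Fin θ) ℝ)).mulVec vhat = -c)
    (hnorm : Real.sqrt (∑ i, vhat i ^ 2) = r) :
    ∀ v : Fin θ → ℝ, Real.sqrt (∑ i, v i ^ 2) = r →
      (1 / 2) * (vhat ⬝ᵥ F.mulVec vhat) + c ⬝ᵥ vhat ≤
        (1 / 2) * (v ⬝ᵥ F.mulVec v) + c ⬝ᵥ v :=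
  trust_region_global_optimality_general θ F c r lam hpsd vhat heq hnorm
end

section
/- Let X = ∏_{n=1}^κ X_n and Z = ∏_{m=1}^μ Z_m be finite products of nonempty finite sets, and let components g̃_{mn}, g̃_m, g̃_{μ+n,m} satisfy the zero-mean and zero-marginal conditions (Σ_{z_m} g̃_m(z_m) = 0; Σ_{z_m} g̃_{mn}(z_m, z_n) = 0 for all fixed z_n, m ≠ n; Σ_{z_m} g̃_{μ+n,m}(x_n, z_m) = 0 for all fixed x_n). Define g̃(x,z) = (1/2) Σ_{m,n=1}^μ g̃_{mn}(z_m,z_n) + Σ_{m=1}^μ g̃_m(z_m) + Σ_{m,n} g̃_{μ+n,m}(x_n,z_m), p(x) = min_{z ∈ Z} g̃(x,z), and let γ(u,v) = (1/2)vᵀFv + hᵀv + uᵀGv be the associated quadratic form and r² = μ − Σ_{m=1}^μ 1/|Z_m|. Then the sphere relaxation provides a lower bound: for every x ∈ X, min_{‖v‖ = r} γ(u(x), v) ≤ p(x); i.e. p̲(x) = γ(u(x), v̂(x)) ≤ p(x) for the relaxed minimizer v̂(x). -/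
open Matrix

/-!
For every `z ∈ Z` the shifted indicator encoding `v°(z)` lies on the sphere of radius `r`, and
the zero-marginal conditions make the constant shift invisible to every term of `γ`, so that
`γ(u(x), v°(z)) = g̃(x, z)`. The sphere being compact, `γ(u(x), ·)` is bounded below on it, so
its infimum there is at most each of these values, hence at most `p(x)`.
-/

section Encoding

variable {ι : Type*} {Z : ι → Type*} [∀ i, Fintype (Z i)] [∀ i, DecidableEq (Z i)]

def indicatorEncoding (z : ∀ i, Z i) : (Σ i, Z i) → ℝ :=
  fun p => if p.2 = z p.1 then 1 else 0

noncomputable def shiftedIndicatorEncoding (z : ∀ i, Z i) : (Σ i, Z i) → ℝ :=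
  fun p => indicatorEncoding z p - 1 / Fintype.card (Z p.1)

theorem indicatorEncoding_dotProduct [Fintype ι] (z : ∀ i, Z i) (w : (Σ i, Z i) → ℝ) :
    indicatorEncoding z ⬝ᵥ w = ∑ i, w ⟨i, z i⟩ := by
  simp [dotProduct, indicatorEncoding, Fintype.sum_sigma, ite_mul]

theorem shiftedIndicatorEncoding_dotProduct [Fintype ι] (z : ∀ i, Z i) {w : (Σ i, Z i) → ℝ}
    (hw : ∀ i, ∑ a, w ⟨i, a⟩ = 0) :
    shiftedIndicatorEncoding z ⬝ᵥ w = ∑ i, w ⟨i, z i⟩ := by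
  have hshift : ∑ p : Σ i, Z i, 1 / (Fintype.card (Z p.1) : ℝ) * w p = 0 := by
    rw [Fintype.sum_sigma]
    refine Finset.sum_eq_zero fun i _ => ?_
    calc _ = 1 / (Fintype.card (Z i) : ℝ) * ∑ a, w ⟨i, a⟩ := (Finset.mul_sum _ _ _).symm
      _ = 0 := by rw [hw, mul_zero]
  simp only [shiftedIndicatorEncoding, dotProduct, sub_mul, Finset.sum_sub_distrib, hshift,
    sub_zero]
  exact indicatorEncoding_dotProduct z w

theorem sum_shiftedIndicatorEncoding_block [∀ i, Nonempty (Z i)] (z : ∀ i, Z i) (i : ι) :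
    ∑ a, shiftedIndicatorEncoding z ⟨i, a⟩ = 0 := by
  have hcard : (Fintype.card (Z i) : ℝ) ≠ 0 := Nat.cast_ne_zero.mpr Fintype.card_ne_zero
  simp only [shiftedIndicatorEncoding, indicatorEncoding, Finset.sum_sub_distrib,
    Finset.sum_ite_eq', Finset.mem_univ, if_true]
  change 1 - ∑ _a : Z i, 1 / (Fintype.card (Z i) : ℝ) = 0
  rw [Finset.sum_const, Finset.card_univ, nsmul_eq_mul, mul_one_div_cancel hcard, sub_self]

theorem sum_shiftedIndicatorEncoding_sq [Fintype ι] [∀ i, Nonempty (Z i)] (z : ∀ i, Z i) :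
    ∑ p, shiftedIndicatorEncoding z p ^ 2 =
      Fintype.card ι - ∑ i, 1 / (Fintype.card (Z i) : ℝ) := by
  simp only [sq]
  rw [← dotProduct, shiftedIndicatorEncoding_dotProduct z (sum_shiftedIndicatorEncoding_block z)]
  simp [shiftedIndicatorEncoding, indicatorEncoding, Finset.sum_sub_distrib]

theorem mulVec_shiftedIndicatorEncoding [Fintype ι] {κ : Type*} {A : Matrix κ (Σ i, Z i) ℝ}
    (hA : ∀ q i, ∑ a, A q ⟨i, a⟩ = 0) (z : ∀ i, Z i) :
    A *ᵥ shiftedIndicatorEncoding z = fun q => ∑ i, A q ⟨i, z i⟩ := by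
  ext q
  rw [mulVec, dotProduct_comm, shiftedIndicatorEncoding_dotProduct z (hA q)]

theorem shiftedIndicatorEncoding_dotProduct_mulVec [Fintype ι] {κ : Type*} [Fintype κ]
    {W : κ → Type*} [∀ j, Fintype (W j)] [∀ j, DecidableEq (W j)]
    {A : Matrix (Σ i, Z i) (Σ j, W j) ℝ}
    (hrow : ∀ p j, ∑ b, A p ⟨j, b⟩ = 0) (hcol : ∀ i q, ∑ a, A ⟨i, a⟩ q = 0)
    (z : ∀ i, Z i) (w : ∀ j, W j) :
    shiftedIndicatorEncoding z ⬝ᵥ A *ᵥ shiftedIndicatorEncoding w =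
      ∑ i, ∑ j, A ⟨i, z i⟩ ⟨j, w j⟩ := by
  rw [mulVec_shiftedIndicatorEncoding hrow]
  refine shiftedIndicatorEncoding_dotProduct z fun i => ?_
  rw [Finset.sum_comm]
  exact Finset.sum_eq_zero fun j _ => hcol i _

end Encoding

theorem sInf_sphere_le {σ : Type*} [Fintype σ] {f : (σ → ℝ) → ℝ} (hf : Continuous f)
    {r : ℝ} {v₀ : σ → ℝ} (hv₀ : √(∑ p, v₀ p ^ 2) = r) :
    sInf {y | ∃ v : σ → ℝ, √(∑ p, v p ^ 2) = r ∧ y = f v} ≤ f v₀ := by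
  have hbdd : BddBelow (f '' (WithLp.ofLp '' Metric.sphere (0 : EuclideanSpace ℝ σ) r)) :=
    (((isCompact_sphere _ _).image (PiLp.continuous_ofLp 2 _)).image hf).bddBelow
  refine csInf_le (hbdd.mono ?_) ⟨v₀, hv₀, rfl⟩
  rintro _ ⟨v, hv, rfl⟩
  exact ⟨v, ⟨WithLp.toLp 2 v, by simpa [EuclideanSpace.norm_eq] using hv, rfl⟩, rfl⟩

theorem trust_region_relaxation_lower_bound_general
    (κ μ : ℕ) (X : Fin κ → Type) (Z : Fin μ → Type)
    [∀ n, Fintype (X n)] [∀ n, DecidableEq (X n)]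
    [∀ m, Fintype (Z m)] [∀ m, Nonempty (Z m)]
    (gZZ : ∀ m n : Fin μ, Z m → Z n → ℝ)
    (gZ : ∀ m : Fin μ, Z m → ℝ)
    (gXZ : ∀ (n : Fin κ) (m : Fin μ), X n → Z m → ℝ)
    (hdiag : ∀ (m : Fin μ) (a b : Z m), gZZ m m a b = 0)
    (hsymm : ∀ (m n : Fin μ) (a : Z m) (b : Z n), gZZ m n a b = gZZ n m b a)
    (hzero1 : ∀ m : Fin μ, ∑ zm : Z m, gZ m zm = 0)
    (hzero2 : ∀ (m n : Fin μ), m ≠ n → ∀ zn : Z n, ∑ zm : Z m, gZZ m n zm zn = 0)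
    (hzeroXZ : ∀ (n : Fin κ) (m : Fin μ) (xn : X n), ∑ zm : Z m, gXZ n m xn zm = 0)
    (gt : (∀ n, X n) → (∀ m, Z m) → ℝ)
    (hgt : ∀ (x : ∀ n, X n) (z : ∀ m, Z m),
      gt x z = (1 / 2) * ∑ m, ∑ n, gZZ m n (z m) (z n) + ∑ m, gZ m (z m) +
        ∑ m, ∑ n, gXZ n m (x n) (z m))
    (F : Matrix ((m : Fin μ) × Z m) ((m : Fin μ) × Z m) ℝ)
    (hF : ∀ p q : (m : Fin μ) × Z m, F p q = gZZ p.1 q.1 p.2 q.2)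
    (G : Matrix ((n : Fin κ) × X n) ((m : Fin μ) × Z m) ℝ)
    (hG : ∀ (p : (n : Fin κ) × X n) (q : (m : Fin μ) × Z m), G p q = gXZ p.1 q.1 p.2 q.2)
    (h : ((m : Fin μ) × Z m) → ℝ)
    (hh : ∀ p : (m : Fin μ) × Z m, h p = gZ p.1 p.2)
    (u : (∀ n, X n) → ((n : Fin κ) × X n) → ℝ)
    (hu : ∀ (x : ∀ n, X n) (p : (n : Fin κ) × X n),
      u x p = if p.2 = x p.1 then (1 : ℝ) else 0)
    (r : ℝ)
    (hr : r = Real.sqrt ((μ : ℝ) - ∑ m : Fin μ, 1 / (Fintype.card (Z m) : ℝ))) :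
    ∀ x : ∀ n, X n,
      sInf {y : ℝ | ∃ v : ((m : Fin μ) × Z m) → ℝ,
          Real.sqrt (∑ p, v p ^ 2) = r ∧
          y = (1 / 2) * (v ⬝ᵥ F.mulVec v) + h ⬝ᵥ v + u x ⬝ᵥ G.mulVec v} ≤
        ⨅ z : ∀ m, Z m, gt x z := by
  classical
  intro x
  have hZZ_marginal (m n : Fin μ) (b : Z n) : ∑ a : Z m, gZZ m n a b = 0 := by
    obtain rfl | hmn := eq_or_ne m n
    · simp [hdiag]
    · exact hzero2 m n hmn b
  have hF_rows (p) (n) : ∑ b : Z n, F p ⟨n, b⟩ = 0 := by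
    simpa [hF, hsymm p.1 n] using hZZ_marginal n p.1 p.2
  have hF_cols (m) (q) : ∑ a : Z m, F ⟨m, a⟩ q = 0 := by
    simpa [hF] using hZZ_marginal m q.1 q.2
  have hG_rows (p) (m) : ∑ b : Z m, G p ⟨m, b⟩ = 0 := by simpa [hG] using hzeroXZ p.1 m p.2
  have hh_blocks (m) : ∑ a : Z m, h ⟨m, a⟩ = 0 := by simpa [hh] using hzero1 m
  have hux : u x = indicatorEncoding x := funext (hu x)
  refine le_ciInf fun z => ?_
  have hv : √(∑ p, shiftedIndicatorEncoding z p ^ 2) = r := by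
    rw [hr, sum_shiftedIndicatorEncoding_sq, Fintype.card_fin]
  calc _ ≤ _ := sInf_sphere_le (by fun_prop) hv
    _ = gt x z := by
      rw [shiftedIndicatorEncoding_dotProduct_mulVec hF_rows hF_cols, dotProduct_comm h,
        shiftedIndicatorEncoding_dotProduct z hh_blocks, mulVec_shiftedIndicatorEncoding hG_rows,
        hux, indicatorEncoding_dotProduct, hgt, Finset.sum_comm (γ := Fin κ)]
      simp only [hF, hG, hh]

/-- The sphere relaxation of the parametrized HDMR minimization gives
a lower bound: for HDMR components satisfying the zero-mean / zero-marginal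
conditions (second-order components symmetric with zero diagonal, as for HDMR of a
single function), with `γ(u,v) = (1/2) vᵀFv + hᵀv + uᵀGv` and
`r² = μ − ∑_m 1/|Z_m|`, for every `x ∈ X` the infimum of `γ(u(x),·)` over the
sphere `‖v‖ = r` is at most `p(x) = min_{z ∈ Z} g̃(x,z)`. -/
theorem trust_region_relaxation_lower_bound
    (κ μ : ℕ) (X : Fin κ → Type) (Z : Fin μ → Type)
    [∀ n, Fintype (X n)] [∀ n, Nonempty (X n)] [∀ n, DecidableEq (X n)]
    [∀ m, Fintype (Z m)] [∀ m, Nonempty (Z m)] [∀ m, DecidableEq (Z m)]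
    (gZZ : ∀ m n : Fin μ, Z m → Z n → ℝ)
    (gZ : ∀ m : Fin μ, Z m → ℝ)
    (gXZ : ∀ (n : Fin κ) (m : Fin μ), X n → Z m → ℝ)
    (hdiag : ∀ (m : Fin μ) (a b : Z m), gZZ m m a b = 0)
    (hsymm : ∀ (m n : Fin μ) (a : Z m) (b : Z n), gZZ m n a b = gZZ n m b a)
    (hzero1 : ∀ m : Fin μ, ∑ zm : Z m, gZ m zm = 0)
    (hzero2 : ∀ (m n : Fin μ), m ≠ n → ∀ zn : Z n, ∑ zm : Z m, gZZ m n zm zn = 0)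
    (hzeroXZ : ∀ (n : Fin κ) (m : Fin μ) (xn : X n), ∑ zm : Z m, gXZ n m xn zm = 0)
    (gt : (∀ n, X n) → (∀ m, Z m) → ℝ)
    (hgt : ∀ (x : ∀ n, X n) (z : ∀ m, Z m),
      gt x z = (1 / 2) * ∑ m, ∑ n, gZZ m n (z m) (z n) + ∑ m, gZ m (z m) +
        ∑ m, ∑ n, gXZ n m (x n) (z m))
    (F : Matrix ((m : Fin μ) × Z m) ((m : Fin μ) × Z m) ℝ)
    (hF : ∀ p q : (m : Fin μ) × Z m, F p q = gZZ p.1 q.1 p.2 q.2)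
    (G : Matrix ((n : Fin κ) × X n) ((m : Fin μ) × Z m) ℝ)
    (hG : ∀ (p : (n : Fin κ) × X n) (q : (m : Fin μ) × Z m), G p q = gXZ p.1 q.1 p.2 q.2)
    (h : ((m : Fin μ) × Z m) → ℝ)
    (hh : ∀ p : (m : Fin μ) × Z m, h p = gZ p.1 p.2)
    (u : (∀ n, X n) → ((n : Fin κ) × X n) → ℝ)
    (hu : ∀ (x : ∀ n, X n) (p : (n : Fin κ) × X n),
      u x p = if p.2 = x p.1 then (1 : ℝ) else 0)
    (r : ℝ)
    (hr : r = Real.sqrt ((μ : ℝ) - ∑ m : Fin μ, 1 / (Fintype.card (Z m) : ℝ))) :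
    ∀ x : ∀ n, X n,
      sInf {y : ℝ | ∃ v : ((m : Fin μ) × Z m) → ℝ,
          Real.sqrt (∑ p, v p ^ 2) = r ∧
          y = (1 / 2) * (v ⬝ᵥ F.mulVec v) + h ⬝ᵥ v + u x ⬝ᵥ G.mulVec v} ≤
        ⨅ z : ∀ m, Z m, gt x z :=
  trust_region_relaxation_lower_bound_general κ μ X Z gZZ gZ gXZ hdiag hsymm hzero1 hzero2 hzeroXZ
    gt hgt F hF G hG h hh u hu r hr
end

section
/- Consider a finite-horizon discrete decision problem with horizon τ, finite nonempty state sets Y_0, …, Y_τ, finite nonempty action sets A_1, …, A_τ, Markov transition kernels f_t : A_t × Y_{t-1} → PMF(Y_t), and loss functions l_t : A_t × Y_t → ℝ. A strategy is a collection of maps a_t : Y_{t-1} → A_t for t = 1,…,τ; its expected total loss from initial state y_0 is J(strategy, y_0) = E[ Σ_{t=1}^τ l_t(a_t(y_{t-1}), y_t) ], where the states evolve as y_t ∼ f_t(· | a_t(y_{t-1}), y_{t-1}). Let V be the Bellman function defined by V_τ = 0 and V_{t-1}(y) = min_{a ∈ A_t} Σ_{y' ∈ Y_t} f_t(y' | a,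 y)·( l_t(a, y') + V_t(y') ). Then (i) for every strategy and every y_0 ∈ Y_0, J(strategy, y_0) ≥ V_0(y_0), and (ii) the strategy defined by â_t(y) ∈ argmin_{a ∈ A_t} Σ_{y' ∈ Y_t} f_t(y' | a, y)·( l_t(a, y') + V_t(y') ) satisfies J(â, y_0) = V_0(y_0) for every y_0; hence V_0(y_0) is the minimal achievable expected total loss and â is an optimal strategy. -/
/-- Optimality of the Bellman strategy. Indexing: `Y t` is the state
space at time `t ∈ {0,…,τ}`; `A t`, `f t`, `l t` stand for the paper's `A_{t+1}`,
`f_{t+1}(y_{t+1} | a_{t+1}, y_t)` and `l_{t+1}(a_{t+1}, y_{t+1})`. A strategy is a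
collection `s t : Y t → A (t+1)`; its expected total loss `J s` from a state at
time `t` satisfies the tower recursion `J s τ = 0`,
`J s t y = ∑ y', f t (s t y) y y' * (l t (s t y) y' + J s (t+1) y')` (this nested
finite sum equals the expectation of the total loss along simulated trajectories),
so `J s 0 y₀` is the expected total loss from initial state `y₀`. With `V` the
Bellman function: (i) every strategy satisfies `V 0 y₀ ≤ J s 0 y₀`, and (ii) any
strategy `ŝ` selecting pointwise minimizers of the Bellman equation satisfies
`J ŝ 0 y₀ = V 0 y₀`; hence `V 0 y₀` is the minimal achievable expected total loss
and `ŝ` is optimal. -/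
theorem bellman_strategy_optimal
    (τ : ℕ) (Y : ℕ → Type) (A : ℕ → Type)
    [∀ t, Fintype (Y t)] [∀ t, Nonempty (Y t)]
    [∀ t, Fintype (A t)] [∀ t, Nonempty (A t)]
    (f : ∀ t : ℕ, A (t + 1) → Y t → Y (t + 1) → ℝ)
    (hf_nonneg : ∀ (t : ℕ) (a : A (t + 1)) (y : Y t) (y' : Y (t + 1)), 0 ≤ f t a y y')
    (hf_sum : ∀ (t : ℕ) (a : A (t + 1)) (y : Y t), ∑ y' : Y (t + 1), f t a y y' = 1)
    (l : ∀ t : ℕ, A (t + 1) → Y (t + 1) → ℝ)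
    (V : ∀ t : ℕ, Y t → ℝ)
    (hVend : ∀ y : Y τ, V τ y = 0)
    (hV : ∀ t : ℕ, t < τ → ∀ y : Y t,
      V t y = ⨅ a : A (t + 1), ∑ y' : Y (t + 1), f t a y y' * (l t a y' + V (t + 1) y')) :
    -- (i) the Bellman function bounds the expected total loss of every strategy
    (∀ (s : ∀ t : ℕ, Y t → A (t + 1)) (J : ∀ t : ℕ, Y t → ℝ),
      (∀ y : Y τ, J τ y = 0) →
      (∀ t : ℕ, t < τ → ∀ y : Y t,
        J t y = ∑ y' : Y (t + 1), f t (s t y) y y' * (l t (s t y) y' + J (t + 1) y')) →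
      ∀ y₀ : Y 0, V 0 y₀ ≤ J 0 y₀) ∧
    -- (ii) a strategy of pointwise minimizers attains the Bellman function
    (∀ (shat : ∀ t : ℕ, Y t → A (t + 1)),
      (∀ t : ℕ, t < τ → ∀ (y : Y t) (a : A (t + 1)),
        ∑ y' : Y (t + 1), f t (shat t y) y y' * (l t (shat t y) y' + V (t + 1) y') ≤
          ∑ y' : Y (t + 1), f t a y y' * (l t a y' + V (t + 1) y')) →
      ∀ J : ∀ t : ℕ, Y t → ℝ,
        (∀ y : Y τ, J τ y = 0) →
        (∀ t : ℕ, t < τ → ∀ y : Y t,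
          J t y = ∑ y' : Y (t + 1),
            f t (shat t y) y y' * (l t (shat t y) y' + J (t + 1) y')) →
        ∀ y₀ : Y 0, J 0 y₀ = V 0 y₀) := by

  constructor
  · intro s J hJend hJ y₀
    have key : ∀ d t, t + d = τ → ∀ y : Y t, V t y ≤ J t y := by
      intro d
      induction d with
      | zero =>
        intro t ht y
        simp only [Nat.add_zero] at ht
        subst ht
        rw [hVend, hJend]
      | succ d ih =>
        intro t ht y
        have htlt : t < τ := by omega
        have ih' : ∀ y' : Y (t + 1), V (t + 1) y' ≤ J (t + 1) y' := ih (t + 1) (by omega)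
        rw [hV t htlt, hJ t htlt]
        refine le_trans (ciInf_le (Finite.bddBelow_range _) (s t y)) ?_
        apply Finset.sum_le_sum
        intro y' _
        have := ih' y'
        nlinarith [hf_nonneg t (s t y) y y']
    exact key τ 0 (by omega) y₀
  · intro shat hmin J hJend hJ y₀
    have key : ∀ d t, t + d = τ → ∀ y : Y t, J t y = V t y := by
      intro d
      induction d with
      | zero =>
        intro t ht y
        simp only [Nat.add_zero] at ht
        subst ht
        rw [hVend, hJend]
      | succ d ih =>
        intro t ht y
        have htlt : t < τ := by omega
        have ih' : ∀ y' : Y (t + 1), J (t + 1) y' = V (t + 1) y' := ih (t + 1) (by omega)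
        rw [hJ t htlt, hV t htlt]
        have hs : ∑ y' : Y (t + 1), f t (shat t y) y y' * (l t (shat t y) y' + J (t + 1) y')
            = ∑ y' : Y (t + 1), f t (shat t y) y y' * (l t (shat t y) y' + V (t + 1) y') := by
          apply Finset.sum_congr rfl
          intro y' _
          rw [ih' y']
        rw [hs]
        refine le_antisymm (le_ciInf fun a => hmin t htlt y a) (ciInf_le (Finite.bddBelow_range _) _)
    exact key τ 0 (by omega) y₀
end
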